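/- arXiv:1507.05230 — 7 statements merged into one kernel-verified Lean document; each statement's English description precedes it below -/
import Mathlib

section
/- Let M be a self-adjoint matrix in ℝ^{n×n}, let V_1, V_2 be subspaces of ℝ^n with orthogonal projectors Π_1, Π_2, and let λ_1, λ_2 ≥ 0. If √(λ_1 λ_2) ≥ ‖Π_1 M Π_2‖, then Π_1 M Π_2 + Π_2 M Π_1 ⪯ λ_1 Π_1 + λ_2 Π_2. -/
/-!
With `u = Π₁ x` and `v = Π₂ x`, the quadratic form of `λ₁ Π₁ + λ₂ Π₂ - (A + Aᵀ)`, where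
`A = Π₁ M Π₂`, at `x` is `λ₁ ‖u‖² + λ₂ ‖v‖² - 2 ⟪u, A v⟫`, because `A = Π₁ A Π₂`. Since
`⟪u, A v⟫ ≤ ‖A‖ ‖u‖ ‖v‖ ≤ √(λ₁ λ₂) ‖u‖ ‖v‖`, it is nonnegative by AM-GM.
-/

open Matrix

/-- The `ℓ²`-operator norm of a real square matrix. -/
noncomputable def opNorm {m : Type*} [Fintype m] [DecidableEq m]
    (M : Matrix m m ℝ) : ℝ :=
  ‖Matrix.toEuclideanCLM (𝕜 := ℝ) M‖

lemma two_mul_sqrt_mul_mul_le {l₁ l₂ : ℝ} (hl₁ : 0 ≤ l₁) (hl₂ : 0 ≤ l₂) (a b : ℝ) :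
    2 * (√(l₁ * l₂) * (a * b)) ≤ l₁ * a ^ 2 + l₂ * b ^ 2 := by
  rw [Real.sqrt_mul hl₁]
  nlinarith [sq_nonneg (√l₁ * a - √l₂ * b), Real.sq_sqrt hl₁, Real.sq_sqrt hl₂]

namespace Matrix

variable {m : Type*} [Fintype m]

lemma dotProduct_self_eq_norm_toLp_sq (u : m → ℝ) : u ⬝ᵥ u = ‖WithLp.toLp 2 u‖ ^ 2 := by
  rw [← real_inner_self_eq_norm_sq, EuclideanSpace.inner_toLp_toLp, star_trivial]

lemma dotProduct_mulVec_le_opNorm [DecidableEq m] (A : Matrix m m ℝ) (u v : m → ℝ) :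
    u ⬝ᵥ A *ᵥ v ≤ opNorm A * (‖WithLp.toLp 2 u‖ * ‖WithLp.toLp 2 v‖) :=
  calc u ⬝ᵥ A *ᵥ v = inner ℝ (WithLp.toLp 2 u) (toEuclideanCLM (𝕜 := ℝ) A (WithLp.toLp 2 v)) := by
        rw [toEuclideanCLM_toLp, EuclideanSpace.inner_toLp_toLp, star_trivial, dotProduct_comm]
    _ ≤ ‖WithLp.toLp 2 u‖ * ‖toEuclideanCLM (𝕜 := ℝ) A (WithLp.toLp 2 v)‖ :=
        real_inner_le_norm _ _
    _ ≤ ‖WithLp.toLp 2 u‖ * (opNorm A * ‖WithLp.toLp 2 v‖) := by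
        gcongr
        exact (toEuclideanCLM (𝕜 := ℝ) A).le_opNorm _
    _ = opNorm A * (‖WithLp.toLp 2 u‖ * ‖WithLp.toLp 2 v‖) := by ring

variable {P : Matrix m m ℝ}

lemma IsHermitian.dotProduct_mul_mulVec (hP : P.IsHermitian) (B : Matrix m m ℝ) (x y : m → ℝ) :
    x ⬝ᵥ (P * B) *ᵥ y = (P *ᵥ x) ⬝ᵥ B *ᵥ y := by
  rw [← mulVec_mulVec, dotProduct_mulVec, ← mulVec_transpose,
    ← conjTranspose_eq_transpose_of_trivial, hP.eq]

lemma IsHermitian.dotProduct_mulVec_self_of_mul_self (hP : P.IsHermitian) (hPP : P * P = P)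
    (x : m → ℝ) : x ⬝ᵥ P *ᵥ x = ‖WithLp.toLp 2 (P *ᵥ x)‖ ^ 2 := by
  rw [← dotProduct_self_eq_norm_toLp_sq, ← hP.dotProduct_mul_mulVec, hPP]

lemma IsHermitian.dotProduct_mul_mul_mulVec_self {Q : Matrix m m ℝ} (hP : P.IsHermitian)
    (hPP : P * P = P) (hQQ : Q * Q = Q) (M : Matrix m m ℝ) (x : m → ℝ) :
    x ⬝ᵥ (P * M * Q) *ᵥ x = (P *ᵥ x) ⬝ᵥ (P * M * Q) *ᵥ (Q *ᵥ x) := by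
  have hPMQ : P * (P * M * Q * Q) = P * M * Q := by
    rw [Matrix.mul_assoc _ Q Q, hQQ, ← Matrix.mul_assoc, ← Matrix.mul_assoc, hPP]
  conv_lhs => rw [← hPMQ]
  rw [hP.dotProduct_mul_mulVec, mulVec_mulVec]

end Matrix

/-- Lemma 2.11: if `√(λ₁ λ₂) ≥ ‖Π₁ M Π₂‖` then
`Π₁ M Π₂ + Π₂ M Π₁ ⪯ λ₁ Π₁ + λ₂ Π₂`. -/
theorem cross_term_bound {n : ℕ} (M Pi1 Pi2 : Matrix (Fin n) (Fin n) ℝ)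
    (hM : M.IsHermitian)
    (h1sym : Pi1.IsHermitian) (h1idem : Pi1 * Pi1 = Pi1)
    (h2sym : Pi2.IsHermitian) (h2idem : Pi2 * Pi2 = Pi2)
    (lam1 lam2 : ℝ) (hlam1 : 0 ≤ lam1) (hlam2 : 0 ≤ lam2)
    (h : opNorm (Pi1 * M * Pi2) ≤ Real.sqrt (lam1 * lam2)) :
    (lam1 • Pi1 + lam2 • Pi2 - (Pi1 * M * Pi2 + Pi2 * M * Pi1)).PosSemidef := by
  set A := Pi1 * M * Pi2
  have hA : Aᴴ = Pi2 * M * Pi1 := by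
    simp only [A, conjTranspose_mul, h1sym.eq, h2sym.eq, hM.eq, Matrix.mul_assoc]
  rw [← hA]
  refine PosSemidef.of_dotProduct_mulVec_nonneg
    (((h1sym.smul (.all lam1)).add (h2sym.smul (.all lam2))).sub (isHermitian_add_transpose_self A))
    fun x => ?_
  have hcross : x ⬝ᵥ A *ᵥ x ≤ √(lam1 * lam2) *
      (‖WithLp.toLp 2 (Pi1 *ᵥ x)‖ * ‖WithLp.toLp 2 (Pi2 *ᵥ x)‖) := by
    rw [h1sym.dotProduct_mul_mul_mulVec_self h1idem h2idem]
    exact (dotProduct_mulVec_le_opNorm A _ _).trans (by gcongr)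
  have hAt : x ⬝ᵥ Aᴴ *ᵥ x = x ⬝ᵥ A *ᵥ x := by
    rw [conjTranspose_eq_transpose_of_trivial, dotProduct_transpose_mulVec]
  simp only [star_trivial, sub_mulVec, add_mulVec, smul_mulVec, dotProduct_sub, dotProduct_add,
    dotProduct_smul, smul_eq_mul, hAt, h1sym.dotProduct_mulVec_self_of_mul_self h1idem,
    h2sym.dotProduct_mulVec_self_of_mul_self h2idem]
  linarith [two_mul_sqrt_mul_mul_le hlam1 hlam2 ‖WithLp.toLp 2 (Pi1 *ᵥ x)‖
    ‖WithLp.toLp 2 (Pi2 *ᵥ x)‖]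
end

section
/- Let Ẽ be a linear functional on polynomials of degree ≤ 2d in x_1,...,x_n satisfying the constraints {x_i² = x_i} and {Σ_i x_i = ω} in the pseudo-expectation sense. Then for all I ⊆ [n] and all m with |I| + m ≤ 2d, Ẽ[ Σ_{J : I⊆J, |J|=|I|+m} x_J ] = C(ω−|I|, m) · Ẽ[x_I], where C(ω−|I|,m) = Π_{x=0}^{m−1}(ω−|I|−x)/m!. -/
/-!
Multiplying `x_S` by `∑ xᵢ - ω` and reducing `x_S xᵢ = x_S` for `i ∈ S` with the Boolean
constraints gives `∑_{j ∉ S} Ẽ[x_{S ∪ {j}}] = (ω - |S|) Ẽ[x_S]`. Summing this over the sets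
`S ⊇ I` with `|S| = |I| + m` counts every superset `J ⊇ I` with `|J| = |I| + m + 1` exactly
`m + 1` times (once for each `j ∈ J \ I`), so the level sums `Sₘ = ∑ Ẽ[x_J]` satisfy
`(m + 1) Sₘ₊₁ = (ω - |I| - m) Sₘ` with `S₀ = Ẽ[x_I]`, whose solution is the binomial formula.
-/

open MvPolynomial

namespace PseudoExpectation

open Finset

section Extensions

variable {σ : Type*} [Fintype σ] [DecidableEq σ]

def extensions (I : Finset σ) (k : ℕ) : Finset (Finset σ) :=
  univ.filter fun J => I ⊆ J ∧ J.card = I.card + k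

@[simp]
theorem mem_extensions {I J : Finset σ} {k : ℕ} :
    J ∈ extensions I k ↔ I ⊆ J ∧ J.card = I.card + k := by
  simp [extensions]

theorem extensions_zero (I : Finset σ) : extensions I 0 = {I} := by
  ext J
  simp only [mem_extensions, add_zero, mem_singleton]
  exact ⟨fun ⟨hIJ, hcard⟩ => (eq_of_subset_of_card_le hIJ hcard.le).symm,
    fun h => h ▸ ⟨Subset.rfl, rfl⟩⟩

theorem sum_extensions_sum_compl_insert {M : Type*} [AddCommMonoid M]
    (f : Finset σ → M) (I : Finset σ) (m : ℕ) :
    ∑ J ∈ extensions I m, ∑ j ∈ Jᶜ, f (insert j J) =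
      (m + 1) • ∑ J ∈ extensions I (m + 1), f J := by
  have hcount : ∀ J ∈ extensions I (m + 1), (J \ I).card = m + 1 := by
    intro J hJ
    rw [mem_extensions] at hJ
    rw [card_sdiff_of_subset hJ.1, hJ.2]
    omega
  have hrhs : (m + 1) • ∑ J ∈ extensions I (m + 1), f J =
      ∑ J ∈ extensions I (m + 1), ∑ _j ∈ J \ I, f J := by
    rw [smul_sum]
    exact sum_congr rfl fun J hJ => by rw [sum_const, hcount J hJ]
  rw [hrhs, sum_sigma', sum_sigma']
  refine sum_nbij' (fun p => ⟨insert p.2 p.1, p.2⟩) (fun p => ⟨p.1.erase p.2, p.2⟩)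
    ?_ ?_ ?_ ?_ fun _ _ => rfl
  · rintro ⟨J, j⟩ h
    simp only [mem_sigma, mem_extensions, mem_compl, mem_sdiff] at h ⊢
    obtain ⟨⟨hIJ, hcard⟩, hj⟩ := h
    refine ⟨⟨hIJ.trans (subset_insert j J), ?_⟩, mem_insert_self j J, fun hjI => hj (hIJ hjI)⟩
    rw [card_insert_of_notMem hj, hcard]
    rfl
  · rintro ⟨J, j⟩ h
    simp only [mem_sigma, mem_extensions, mem_compl, mem_sdiff] at h ⊢
    obtain ⟨⟨hIJ, hcard⟩, hjJ, hjI⟩ := h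
    refine ⟨⟨fun i hi => mem_erase.mpr ⟨fun hij => hjI (hij ▸ hi), hIJ hi⟩, ?_⟩, notMem_erase j J⟩
    rw [card_erase_of_mem hjJ, hcard]
    rfl
  · rintro ⟨J, j⟩ h
    rw [mem_sigma, mem_compl] at h
    simp [erase_insert h.2]
  · rintro ⟨J, j⟩ h
    rw [mem_sigma, mem_sdiff] at h
    simp [insert_erase h.2.1]

end Extensions

variable {σ R : Type*} [CommRing R]

theorem totalDegree_prod_X_le (S : Finset σ) :
    (∏ i ∈ S, X i : MvPolynomial σ R).totalDegree ≤ S.card := by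
  rcases subsingleton_or_nontrivial R with hR | hR
  · simp [Subsingleton.elim (∏ i ∈ S, X i : MvPolynomial σ R) 0]
  · refine (totalDegree_finsetProd S _).trans ?_
    simp [totalDegree_X]

def BooleanConstraint (E : MvPolynomial σ R →ₗ[R] R) (d : ℕ) : Prop :=
  ∀ (p : MvPolynomial σ R) (i : σ), p.totalDegree + 2 ≤ 2 * d → E (p * (X i ^ 2 - X i)) = 0

def CardinalityConstraint [Fintype σ] (E : MvPolynomial σ R →ₗ[R] R) (d : ℕ) (ω : R) : Prop :=
  ∀ p : MvPolynomial σ R, p.totalDegree ≤ 2 * d - 1 → E (p * ((∑ i : σ, X i) - C ω)) = 0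

variable {d : ℕ} {ω : R} {E : MvPolynomial σ R →ₗ[R] R}

theorem apply_prod_X_mul_X_of_mem [DecidableEq σ] (hsq : BooleanConstraint E d)
    {S : Finset σ} (hS : S.card + 1 ≤ 2 * d) {i : σ} (hi : i ∈ S) :
    E ((∏ j ∈ S, X j) * X i) = E (∏ j ∈ S, X j) := by
  have hdeg := totalDegree_prod_X_le (R := R) (S.erase i)
  have hcard : (S.erase i).card + 1 = S.card := card_erase_add_one hi
  have hfactor : (∏ j ∈ S, X j) * X i - ∏ j ∈ S, X j =
      (∏ j ∈ S.erase i, X j) * (X i ^ 2 - X i : MvPolynomial σ R) := by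
    rw [← prod_erase_mul S X hi]
    ring
  rw [← sub_eq_zero, ← map_sub, hfactor]
  exact hsq _ i (by omega)

theorem sum_compl_apply_prod_X_insert [Fintype σ] [DecidableEq σ]
    (hsum : CardinalityConstraint E d ω)
    (hsq : BooleanConstraint E d)
    {S : Finset σ} (hS : S.card + 1 ≤ 2 * d) :
    ∑ j ∈ Sᶜ, E (∏ i ∈ insert j S, X i) = (ω - S.card) * E (∏ i ∈ S, X i) := by
  have hzero := hsum (∏ i ∈ S, X i) ((totalDegree_prod_X_le S).trans (by omega))
  rw [mul_sub, mul_sum, ← sum_add_sum_compl S, map_sub, map_add, map_sum, map_sum,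
    sum_congr rfl fun i hi => apply_prod_X_mul_X_of_mem hsq hS hi, mul_comm, ← smul_eq_C_mul,
    map_smul, sum_const] at hzero
  have hinsert : ∀ j ∈ Sᶜ, E ((∏ i ∈ S, X i) * X j) = E (∏ i ∈ insert j S, X i) :=
    fun j hj => by rw [prod_insert (mem_compl.mp hj), mul_comm]
  rw [sum_congr rfl hinsert, nsmul_eq_mul, smul_eq_mul] at hzero
  linear_combination hzero

theorem succ_mul_sum_extensions_succ [Fintype σ] [DecidableEq σ]
    (hsum : CardinalityConstraint E d ω)
    (hsq : BooleanConstraint E d)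
    {I : Finset σ} {m : ℕ} (hIm : I.card + m + 1 ≤ 2 * d) :
    (m + 1 : R) * ∑ J ∈ extensions I (m + 1), E (∏ i ∈ J, X i) =
      (ω - I.card - m) * ∑ J ∈ extensions I m, E (∏ i ∈ J, X i) := by
  rw [← Nat.cast_succ, ← nsmul_eq_mul,
    ← sum_extensions_sum_compl_insert (fun J => E (∏ i ∈ J, X i)), mul_sum]
  refine sum_congr rfl fun J hJ => ?_
  rw [mem_extensions] at hJ
  rw [sum_compl_apply_prod_X_insert hsum hsq (by omega), hJ.2]
  push_cast
  ring

theorem factorial_mul_sum_extensions [Fintype σ] [DecidableEq σ]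
    (hsum : CardinalityConstraint E d ω)
    (hsq : BooleanConstraint E d)
    (I : Finset σ) {m : ℕ} (hIm : I.card + m ≤ 2 * d) :
    (m.factorial : R) * ∑ J ∈ extensions I m, E (∏ i ∈ J, X i) =
      (∏ x ∈ range m, (ω - I.card - x)) * E (∏ i ∈ I, X i) := by
  induction m with
  | zero => simp [extensions_zero]
  | succ m ih =>
    calc ((m + 1).factorial : R) * ∑ J ∈ extensions I (m + 1), E (∏ i ∈ J, X i)
        = m.factorial * ((m + 1) * ∑ J ∈ extensions I (m + 1), E (∏ i ∈ J, X i)) := by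
          push_cast [Nat.factorial_succ]
          ring
      _ = (ω - I.card - m) * (m.factorial * ∑ J ∈ extensions I m, E (∏ i ∈ J, X i)) := by
          rw [succ_mul_sum_extensions_succ hsum hsq hIm]
          ring
      _ = (∏ x ∈ range (m + 1), (ω - I.card - x)) * E (∏ i ∈ I, X i) := by
          rw [ih (by omega), prod_range_succ]
          ring

end PseudoExpectation

open PseudoExpectation in
/-- Corollary: under the pseudo-expectation constraints `{x_i² = x_i}` and
`{∑ x_i = ω}`, for all `I` and `m` with `|I| + m ≤ 2d`,
`E[∑_{J ⊇ I, |J| = |I|+m} x_J] = C(ω−|I|, m)·E[x_I]`. -/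
theorem pseudoexpectation_extend_many {n d : ℕ} (ω : ℝ)
    (E : MvPolynomial (Fin n) ℝ →ₗ[ℝ] ℝ)
    (hsum : ∀ p : MvPolynomial (Fin n) ℝ, p.totalDegree ≤ 2 * d - 1 →
      E (p * ((∑ i : Fin n, X i) - C ω)) = 0)
    (hsq : ∀ (p : MvPolynomial (Fin n) ℝ) (i : Fin n),
      p.totalDegree + 2 ≤ 2 * d → E (p * (X i ^ 2 - X i)) = 0)
    (I : Finset (Fin n)) (m : ℕ) (hIm : I.card + m ≤ 2 * d) :
    E (∑ J ∈ (Finset.univ : Finset (Finset (Fin n))).filter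
        (fun J => I ⊆ J ∧ J.card = I.card + m), ∏ i ∈ J, X i) =
      ((∏ x ∈ Finset.range m, (ω - (I.card : ℝ) - (x : ℝ))) / (m.factorial : ℝ)) *
        E (∏ i ∈ I, X i) := by
  rw [div_mul_eq_mul_div, eq_div_iff (Nat.cast_ne_zero.mpr m.factorial_ne_zero), mul_comm,
    map_sum]
  exact factorial_mul_sum_extensions hsum hsq I hIm
end

section
/- Let G be any graph on vertex set [n], let 2d ≤ n, and define deg_G(I) as the number of 2d-element cliques of G containing I, and C_{2d} as the number of 2d-cliques in G (assumed nonzero). Define Ẽ[x_I] = (deg_G(I)/C_{2d})·(C(ω,|I|)/C(2d,|I|)) for |I| ≤ 2d and extend multilinearly to polynomials of degree at most 2d. Then Ẽ satisfies the constraint equalities: Ẽ[x_I·(x_i − x_i²)] = 0 for all appropriate I,i; Ẽ[x_I · x_i x_j] = 0 whenever {i,j} is not an edge of G; and Ẽ[x_I · (Σ_i x_i − ω)] = 0 for |I| ≤ 2d−1. -/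
/-!
`Ẽ` only sees the support of a monomial, so `x_I x_i` and `x_I x_i²` have the same value, and
a support containing a non-edge lies in no clique, so its value is `0`. For the last family,
`Ẽ[x_I ∑ x_i] = |I| Ẽ[x_I] + ∑_{i ∉ I} Ẽ[x_{I ∪ i}]`. Every `2d`-clique through `I` has
exactly `2d - |I|` vertices outside `I`, so double counting gives
`∑_{i ∉ I} deg(I ∪ i) = (2d - |I|) deg(I)`, and the identity
`(2d - k) C(ω, k+1) / C(2d, k+1) = (ω - k) C(ω, k) / C(2d, k)` turns the sum into
`(ω - |I|) Ẽ[x_I]`.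
-/

open MvPolynomial

/-- `deg_G(I)`: the number of `2d`-element cliques of `G` containing `I`.
(Taking `I = ∅` gives `C_{2d}`, the number of `2d`-cliques of `G`.) -/
noncomputable def degG {n : ℕ} (G : SimpleGraph (Fin n)) (d : ℕ)
    (I : Finset (Fin n)) : ℕ :=
  Nat.card {s : Finset (Fin n) //
    I ⊆ s ∧ s.card = 2 * d ∧ G.IsClique (s : Set (Fin n))}

/-- The MPW value on the multilinear monomial `x_I`:
`(deg_G(I)/C_{2d})·(C(ω,|I|)/C(2d,|I|))`, where `C(ω,k)` is the generalized
binomial coefficient of the real number `ω`. -/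
noncomputable def mpwVal {n : ℕ} (G : SimpleGraph (Fin n)) (d : ℕ) (ω : ℝ)
    (I : Finset (Fin n)) : ℝ :=
  ((degG G d I : ℝ) / (degG G d ∅ : ℝ)) *
    (((∏ x ∈ Finset.range I.card, (ω - (x : ℝ))) / (I.card.factorial : ℝ)) /
      (((2 * d).choose I.card : ℝ)))

/-- The multilinear extension of a set function `f` to a (pseudo-expectation)
functional on polynomials: each monomial `x^α` is evaluated as `f (supp α)`. -/
noncomputable def multilinearExt {n : ℕ} (f : Finset (Fin n) → ℝ)
    (p : MvPolynomial (Fin n) ℝ) : ℝ :=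
  ∑ α ∈ p.support, p.coeff α * f α.support

open Finset

section Monomials

variable {σ R : Type*} [CommSemiring R]

lemma prod_X_eq_monomial (I : Finset σ) :
    ∏ j ∈ I, (X j : MvPolynomial σ R) = monomial (∑ j ∈ I, Finsupp.single j 1) 1 :=
  (monomial_sum_one I _).symm

lemma support_sum_single_one [DecidableEq σ] (I : Finset σ) :
    (∑ j ∈ I, Finsupp.single j (1 : ℕ)).support = I := by
  rw [Finsupp.support_sum_eq_biUnion]
  · simp
  · intro i j hij
    simp [hij]

lemma support_add_single_of_ne_zero [DecidableEq σ] (α : σ →₀ ℕ) (i : σ) {k : ℕ}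
    (hk : k ≠ 0) : (α + Finsupp.single i k).support = insert i α.support := by
  rw [Finsupp.support_add_eq_union, Finsupp.support_single _ hk, union_comm,
    insert_eq]

end Monomials

section MultilinearExt

variable {n : ℕ} (f : Finset (Fin n) → ℝ)

lemma multilinearExt_add (p q : MvPolynomial (Fin n) ℝ) :
    multilinearExt f (p + q) = multilinearExt f p + multilinearExt f q :=
  Finsupp.sum_add_index' (h := fun (α : Fin n →₀ ℕ) (c : ℝ) => c * f α.support)
    (fun _ => zero_mul _) (fun _ _ _ => add_mul _ _ _)

lemma multilinearExt_sub (p q : MvPolynomial (Fin n) ℝ) :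
    multilinearExt f (p - q) = multilinearExt f p - multilinearExt f q :=
  (AddMonoidHom.mk' _ (multilinearExt_add f)).map_sub p q

lemma multilinearExt_sum {ι : Type*} (s : Finset ι) (p : ι → MvPolynomial (Fin n) ℝ) :
    multilinearExt f (∑ i ∈ s, p i) = ∑ i ∈ s, multilinearExt f (p i) :=
  map_sum (AddMonoidHom.mk' _ (multilinearExt_add f)) p s

lemma multilinearExt_monomial (α : Fin n →₀ ℕ) (c : ℝ) :
    multilinearExt f (monomial α c) = c * f α.support := by
  rcases eq_or_ne c 0 with rfl | hc
  · simp [multilinearExt]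
  · classical
    simp [multilinearExt, support_monomial, hc]

lemma multilinearExt_prod_X_mul_C (I : Finset (Fin n)) (c : ℝ) :
    multilinearExt f ((∏ j ∈ I, X j) * C c) = c * f I := by
  classical
  rw [prod_X_eq_monomial, C_apply, monomial_mul, one_mul, add_zero, multilinearExt_monomial,
    support_sum_single_one]

lemma multilinearExt_prod_X_mul_X_pow (I : Finset (Fin n)) (i : Fin n) {k : ℕ} (hk : k ≠ 0) :
    multilinearExt f ((∏ j ∈ I, X j) * X i ^ k) = f (insert i I) := by
  classical
  rw [prod_X_eq_monomial, ← monomial_add_single, multilinearExt_monomial,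
    support_add_single_of_ne_zero _ _ hk, support_sum_single_one, one_mul]

lemma multilinearExt_prod_X_mul_X (I : Finset (Fin n)) (i : Fin n) :
    multilinearExt f ((∏ j ∈ I, X j) * X i) = f (insert i I) := by
  simpa using multilinearExt_prod_X_mul_X_pow f I i one_ne_zero

lemma multilinearExt_prod_X_mul_X_mul_X (I : Finset (Fin n)) (i j : Fin n) :
    multilinearExt f ((∏ j' ∈ I, X j') * X i * X j) = f (insert j (insert i I)) := by
  classical
  rw [prod_X_eq_monomial, ← pow_one (X i), ← pow_one (X j), ← monomial_add_single,
    ← monomial_add_single, multilinearExt_monomial, support_add_single_of_ne_zero _ _ one_ne_zero,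
    support_add_single_of_ne_zero _ _ one_ne_zero, support_sum_single_one, one_mul]

lemma multilinearExt_prod_X_mul_sum_X_sub_C (I : Finset (Fin n)) (ω : ℝ) :
    multilinearExt f ((∏ j ∈ I, X j) * ((∑ i, X i) - C ω))
      = ∑ i ∈ Iᶜ, f (insert i I) - (ω - I.card) * f I := by
  have hI : ∑ i ∈ I, f (insert i I) = I.card * f I := by
    rw [sum_congr rfl fun i hi => by rw [insert_eq_of_mem hi], sum_const, nsmul_eq_mul]
  rw [mul_sub, mul_sum, multilinearExt_sub, multilinearExt_sum, multilinearExt_prod_X_mul_C]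
  simp only [multilinearExt_prod_X_mul_X]
  rw [← sum_add_sum_compl I, hI]
  ring

end MultilinearExt

/-- `C(ω, k) / C(m, k)`, with `C(ω, k)` the generalized binomial coefficient. -/
noncomputable def binomRatio (m : ℕ) (ω : ℝ) (k : ℕ) : ℝ :=
  (∏ x ∈ range k, (ω - x)) / k.factorial / m.choose k

lemma natCast_sub_mul_binomRatio_succ {m k : ℕ} (hk : k < m) (ω : ℝ) :
    ((m - k : ℕ) : ℝ) * binomRatio m ω (k + 1) = (ω - k) * binomRatio m ω k := by
  have hchoose : (m.choose (k + 1) : ℝ) * (k + 1) = m.choose k * (m - k : ℕ) := by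
    exact_mod_cast Nat.choose_succ_right_eq m k
  have hmk : ((m - k : ℕ) : ℝ) ≠ 0 := by exact_mod_cast (Nat.sub_pos_of_lt hk).ne'
  have hc : (m.choose k : ℝ) ≠ 0 := by exact_mod_cast (Nat.choose_pos hk.le).ne'
  have hc' : (m.choose (k + 1) : ℝ) ≠ 0 := by exact_mod_cast (Nat.choose_pos hk).ne'
  unfold binomRatio
  rw [prod_range_succ, Nat.factorial_succ, Nat.cast_mul, Nat.cast_succ]
  field_simp
  linear_combination -((∏ x ∈ range k, (ω - x)) * (ω - k) * hchoose)

section CliqueCounts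

variable {n : ℕ} (G : SimpleGraph (Fin n)) (d : ℕ)

open Classical in
lemma degG_eq_card_filter (I : Finset (Fin n)) :
    degG G d I = #{s ∈ G.cliqueFinset (2 * d) | I ⊆ s} := by
  rw [degG, Nat.card_eq_fintype_card, Fintype.card_subtype]
  congr 1
  ext s
  simp [SimpleGraph.isNClique_iff, and_comm]

lemma degG_eq_zero_of_not_adj {I : Finset (Fin n)} {i j : Fin n} (hij : i ≠ j)
    (hadj : ¬ G.Adj i j) (hi : i ∈ I) (hj : j ∈ I) : degG G d I = 0 := by
  have : IsEmpty {s : Finset (Fin n) // I ⊆ s ∧ s.card = 2 * d ∧ G.IsClique (s : Set (Fin n))} :=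
    ⟨fun ⟨_, hIs, _, hs⟩ => hadj (hs (hIs hi) (hIs hj) hij)⟩
  exact Nat.card_of_isEmpty

lemma sum_degG_insert_compl (I : Finset (Fin n)) :
    ∑ i ∈ Iᶜ, degG G d (insert i I) = (2 * d - I.card) * degG G d I := by
  classical
  set A := {s ∈ G.cliqueFinset (2 * d) | I ⊆ s}
  have hinsert : ∀ i ∈ Iᶜ, degG G d (insert i I) = #(A.bipartiteAbove (· ∈ ·) i) := fun i _ => by
    rw [bipartiteAbove, degG_eq_card_filter, filter_filter]
    simp only [insert_subset_iff, and_comm]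
  have hcard : ∀ s ∈ A, #(Iᶜ.bipartiteBelow (· ∈ ·) s) = 2 * d - I.card := fun s hs => by
    obtain ⟨hs, hIs⟩ := mem_filter.mp hs
    rw [bipartiteBelow, filter_mem_eq_inter, inter_comm, ← sdiff_eq_inter_compl,
      card_sdiff_of_subset hIs, (G.mem_cliqueFinset_iff.mp hs).card_eq]
  calc ∑ i ∈ Iᶜ, degG G d (insert i I)
      = ∑ i ∈ Iᶜ, #(A.bipartiteAbove (· ∈ ·) i) := sum_congr rfl hinsert
    _ = ∑ s ∈ A, #(Iᶜ.bipartiteBelow (· ∈ ·) s) :=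
        sum_card_bipartiteAbove_eq_sum_card_bipartiteBelow _
    _ = (2 * d - I.card) * degG G d I := by
        rw [sum_congr rfl hcard, sum_const, smul_eq_mul, mul_comm, degG_eq_card_filter]

lemma mpwVal_eq (ω : ℝ) (I : Finset (Fin n)) :
    mpwVal G d ω I = degG G d I / degG G d ∅ * binomRatio (2 * d) ω I.card := rfl

lemma sum_mpwVal_insert_compl (ω : ℝ) {I : Finset (Fin n)} (hI : I.card < 2 * d) :
    ∑ i ∈ Iᶜ, mpwVal G d ω (insert i I) = (ω - I.card) * mpwVal G d ω I := by
  calc ∑ i ∈ Iᶜ, mpwVal G d ω (insert i I)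
      = (∑ i ∈ Iᶜ, (degG G d (insert i I) : ℝ)) / degG G d ∅
          * binomRatio (2 * d) ω (I.card + 1) := by
        rw [sum_div, sum_mul]
        refine sum_congr rfl fun i hi => ?_
        rw [mpwVal_eq, card_insert_of_notMem (mem_compl.mp hi)]
    _ = degG G d I / degG G d ∅
          * (((2 * d - I.card : ℕ) : ℝ) * binomRatio (2 * d) ω (I.card + 1)) := by
        rw [← Nat.cast_sum, sum_degG_insert_compl, Nat.cast_mul]
        ring
    _ = (ω - I.card) * mpwVal G d ω I := by
        rw [natCast_sub_mul_binomRatio_succ hI, mpwVal_eq]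
        ring

end CliqueCounts

theorem mpw_satisfies_constraints_general {n d : ℕ} (G : SimpleGraph (Fin n))
    (ω : ℝ) :
    (∀ (I : Finset (Fin n)) (i : Fin n), I.card + 2 ≤ 2 * d →
      multilinearExt (mpwVal G d ω) ((∏ j ∈ I, X j) * (X i - X i ^ 2)) = 0) ∧
    (∀ (I : Finset (Fin n)) (i j : Fin n), i ≠ j → ¬ G.Adj i j →
      I.card + 2 ≤ 2 * d →
      multilinearExt (mpwVal G d ω) ((∏ j' ∈ I, X j') * X i * X j) = 0) ∧
    (∀ I : Finset (Fin n), I.card + 1 ≤ 2 * d →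
      multilinearExt (mpwVal G d ω)
        ((∏ j ∈ I, X j) * ((∑ i : Fin n, X i) - C ω)) = 0) := by
  refine ⟨fun I i _ => ?_, fun I i j hij hadj _ => ?_, fun I hI => ?_⟩
  · rw [mul_sub, multilinearExt_sub, multilinearExt_prod_X_mul_X,
      multilinearExt_prod_X_mul_X_pow _ _ _ two_ne_zero, sub_self]
  · rw [multilinearExt_prod_X_mul_X_mul_X, mpwVal_eq,
      degG_eq_zero_of_not_adj G d hij hadj (mem_insert_of_mem (mem_insert_self i I))
        (mem_insert_self j _), Nat.cast_zero, zero_div, zero_mul]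
  · rw [multilinearExt_prod_X_mul_sum_X_sub_C, sum_mpwVal_insert_compl G d ω hI, sub_self]

/-- The MPW operator `Ẽ[x_I] = (deg_G(I)/C_{2d})·(C(ω,|I|)/C(2d,|I|))`,
extended multilinearly, satisfies the constraint equalities
`Ẽ[x_I(x_i − x_i²)] = 0`, `Ẽ[x_I x_i x_j] = 0` for non-edges `{i,j}`, and
`Ẽ[x_I(∑ x_i − ω)] = 0`, at the appropriate degrees. -/
theorem mpw_satisfies_constraints {n d : ℕ} (G : SimpleGraph (Fin n))
    (h2d : 2 * d ≤ n) (hC : degG G d ∅ ≠ 0) (ω : ℝ) :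
    (∀ (I : Finset (Fin n)) (i : Fin n), I.card + 2 ≤ 2 * d →
      multilinearExt (mpwVal G d ω) ((∏ j ∈ I, X j) * (X i - X i ^ 2)) = 0) ∧
    (∀ (I : Finset (Fin n)) (i j : Fin n), i ≠ j → ¬ G.Adj i j →
      I.card + 2 ≤ 2 * d →
      multilinearExt (mpwVal G d ω) ((∏ j' ∈ I, X j') * X i * X j) = 0) ∧
    (∀ I : Finset (Fin n), I.card + 1 ≤ 2 * d →
      multilinearExt (mpwVal G d ω)
        ((∏ j ∈ I, X j) * ((∑ i : Fin n, X i) - C ω)) = 0) :=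
  mpw_satisfies_constraints_general G ω
end

section
/- Let (R,F) be a contributing labeled U-ribbon of length 2ℓ for a bipartite graph U on [d]×[d] containing the edges (1,1),...,(k,k), where the label classes {F(a_j^i),F(b_j^i)} for j ≤ k and the remaining labels are disjoint as specified. Then the number of distinct labels |{F(u) : u ∈ R}| is at most (2d − k)ℓ + k. -/
/-!
The labels of a coordinate `j` form its label class; there are `d` classes, each of size at most
`2ℓ`, and they cover all labels. For `j < k` the block of the ribbon coming from the edge `(j, j)`
is the closed walk `a_j^1 b_j^1 a_j^2 b_j^2 ⋯ a_j^1` of length `2ℓ`. By disjointness, no other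
block of the ribbon shares an edge with it, so each of its labeled edges occurs an even number of
times already inside it: it has at most `ℓ` distinct labeled edges, and, being connected through
them, at most `ℓ + 1` distinct labels. Summing, `k (ℓ + 1) + (d - k) 2ℓ = (2d - k)ℓ + k`.
-/

/-- The multiset of labeled edges of a labeled `U`-ribbon of length `2ℓ`.
Vertices are `a_j^i = (true, i, j)` and `b_j^i = (false, i, j)` for
`i ∈ [ℓ]`, `j ∈ [d]`; for each `i` and each edge `(x,y) ∈ U` the ribbon has
the edges `{a_x^i, b_y^i}` and `{a_x^{i+1}, b_y^i}` (cyclically in `i`). -/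
def ribbonEdges {α : Type*} (ℓ d : ℕ) [NeZero ℓ]
    (U : Finset (Fin d × Fin d)) (F : Bool × Fin ℓ × Fin d → α) :
    Multiset (Sym2 α) :=
  ∑ p ∈ (Finset.univ : Finset (Fin ℓ)) ×ˢ U,
    ({s(F (true, p.1, p.2.1), F (false, p.1, p.2.2)),
      s(F (true, p.1 + 1, p.2.1), F (false, p.1, p.2.2))} :
        Multiset (Sym2 α))

open Finset Fin.NatCast

theorem Multiset.two_mul_card_toFinset_le_of_even_count {α : Type*} [DecidableEq α]
    (M : Multiset α) (h : ∀ a, Even (M.count a)) : 2 * M.toFinset.card ≤ M.card := by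
  calc 2 * M.toFinset.card = ∑ _a ∈ M.toFinset, 2 := by rw [sum_const, smul_eq_mul, mul_comm]
    _ ≤ ∑ a ∈ M.toFinset, M.count a := by
      refine sum_le_sum fun a ha => ?_
      obtain ⟨m, hm⟩ := h a
      have : 0 < M.count a := Multiset.count_pos.2 (Multiset.mem_toFinset.1 ha)
      omega
    _ = M.card := Multiset.toFinset_sum_count_eq M

theorem card_image_range_succ_le_card_edges_add_one {α : Type*} [DecidableEq α] (w : ℕ → α)
    (n : ℕ) :
    ((range (n + 1)).image w).card ≤ ((range n).image fun t => s(w t, w (t + 1))).card + 1 := by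
  induction n with
  | zero => simp
  | succ n ih =>
    have hvertices : (range (n + 2)).image w = insert (w (n + 1)) ((range (n + 1)).image w) := by
      rw [range_add_one, image_insert]
    have hedges : ((range (n + 1)).image fun t => s(w t, w (t + 1))) =
        insert s(w n, w (n + 1)) ((range n).image fun t => s(w t, w (t + 1))) := by
      rw [range_add_one, image_insert]
    rw [hvertices, hedges]
    by_cases hnew : w (n + 1) ∈ (range (n + 1)).image w
    · rw [insert_eq_self.2 hnew]
      exact ih.trans (by gcongr; exact subset_insert _ _)
    · have hedge : s(w n, w (n + 1)) ∉ (range n).image fun t => s(w t, w (t + 1)) := by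
        simp only [mem_image, mem_range, not_exists, not_and] at hnew ⊢
        intro t ht hte
        rcases Sym2.mem_iff.1 (hte ▸ Sym2.mem_mk_right _ _ : w (n + 1) ∈ s(w t, w (t + 1))) with
          h | h
        · exact hnew t (by omega) h.symm
        · exact hnew (t + 1) (by omega) h.symm
      rw [card_insert_of_notMem hnew, card_insert_of_notMem hedge]
      omega

section LabelClass

variable {α : Type*} [DecidableEq α] {ℓ d : ℕ} (F : Bool × Fin ℓ × Fin d → α)

def labelClass (j : Fin d) : Finset α :=
  (univ.image fun i : Fin ℓ => F (true, i, j)) ∪ (univ.image fun i : Fin ℓ => F (false, i, j))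

theorem mem_labelClass (b : Bool) (i : Fin ℓ) (j : Fin d) : F (b, i, j) ∈ labelClass F j := by
  cases b <;> simp [labelClass]

theorem card_labelClass_le (j : Fin d) : (labelClass F j).card ≤ 2 * ℓ :=
  (card_union_le _ _).trans <| by
    have h₁ := card_image_le (s := univ) (f := fun i : Fin ℓ => F (true, i, j))
    have h₂ := card_image_le (s := univ) (f := fun i : Fin ℓ => F (false, i, j))
    simp only [card_univ, Fintype.card_fin] at h₁ h₂
    omega

theorem card_image_le_sum_card_labelClass :
    (univ.image F).card ≤ ∑ j : Fin d, (labelClass F j).card := by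
  refine (card_le_card fun a ha => ?_).trans card_biUnion_le
  obtain ⟨⟨b, i, j⟩, -, rfl⟩ := mem_image.1 ha
  exact mem_biUnion.2 ⟨j, mem_univ _, mem_labelClass F b i j⟩

end LabelClass

section Ribbon

variable {α : Type*} {ℓ d : ℕ} [NeZero ℓ] (F : Bool × Fin ℓ × Fin d → α)

/-- The part of the ribbon contributed by the edge `(x, y)` of `U`. -/
def ribbonBlock (x y : Fin d) : Multiset (Sym2 α) :=
  ∑ i : Fin ℓ, {s(F (true, i, x), F (false, i, y)), s(F (true, i + 1, x), F (false, i, y))}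

theorem ribbonEdges_eq_sum_ribbonBlock (U : Finset (Fin d × Fin d)) :
    ribbonEdges ℓ d U F = ∑ p ∈ U, ribbonBlock F p.1 p.2 := by
  rw [ribbonEdges, sum_product_right]
  rfl

theorem card_ribbonBlock (x y : Fin d) : (ribbonBlock F x y).card = 2 * ℓ := by
  simp [ribbonBlock, Multiset.card_sum, mul_comm]

/-- The closed walk `a_j^0 b_j^0 a_j^1 b_j^1 ⋯` through the diagonal block of coordinate `j`. -/
def diagonalWalk (j : Fin d) (t : ℕ) : α :=
  F (t % 2 = 0, ((t / 2 : ℕ) : Fin ℓ), j)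

theorem diagonalWalk_two_mul (j : Fin d) (i : ℕ) :
    diagonalWalk F j (2 * i) = F (true, (i : Fin ℓ), j) := by
  simp [diagonalWalk]

theorem diagonalWalk_two_mul_add_one (j : Fin d) (i : ℕ) :
    diagonalWalk F j (2 * i + 1) = F (false, (i : Fin ℓ), j) := by
  simp [diagonalWalk, show (2 * i + 1) / 2 = i by omega]

theorem mem_ribbonBlock_of_diagonalWalk (j : Fin d) (t : ℕ) :
    s(diagonalWalk F j t, diagonalWalk F j (t + 1)) ∈ ribbonBlock F j j := by
  refine Multiset.mem_sum.2 ⟨((t / 2 : ℕ) : Fin ℓ), mem_univ _, ?_⟩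
  obtain ⟨i, rfl | rfl⟩ := Nat.even_or_odd' t
  · rw [show 2 * i / 2 = i by omega, diagonalWalk_two_mul, diagonalWalk_two_mul_add_one]
    exact Multiset.mem_cons_self _ _
  · rw [show (2 * i + 1) / 2 = i by omega, diagonalWalk_two_mul_add_one,
      show 2 * i + 1 + 1 = 2 * (i + 1) by ring, diagonalWalk_two_mul, Nat.cast_add_one]
    exact Multiset.mem_cons_of_mem (Multiset.mem_singleton.2 Sym2.eq_swap)

variable [DecidableEq α]

theorem exists_eq_of_mem_ribbonBlock {e : Sym2 α} {x y : Fin d} (he : e ∈ ribbonBlock F x y) :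
    ∃ a ∈ labelClass F x, ∃ b ∈ labelClass F y, e = s(a, b) := by
  obtain ⟨i, -, hi⟩ := Multiset.mem_sum.1 he
  simp only [Multiset.insert_eq_cons, Multiset.mem_cons, Multiset.mem_singleton] at hi
  rcases hi with rfl | rfl
  · exact ⟨_, mem_labelClass F true i x, _, mem_labelClass F false i y, rfl⟩
  · exact ⟨_, mem_labelClass F true (i + 1) x, _, mem_labelClass F false i y, rfl⟩

theorem count_ribbonBlock_eq_zero {j : Fin d}
    (hdisj : ∀ j', j ≠ j' → Disjoint (labelClass F j) (labelClass F j')) {e : Sym2 α}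
    (he : ∀ a ∈ e, a ∈ labelClass F j) {x y : Fin d} (hxy : (x, y) ≠ (j, j)) :
    (ribbonBlock F x y).count e = 0 := by
  refine Multiset.count_eq_zero.2 fun hmem => ?_
  obtain ⟨a, ha, b, hb, rfl⟩ := exists_eq_of_mem_ribbonBlock F hmem
  by_cases hx : x = j
  · subst hx
    exact disjoint_left.1 (hdisj y fun h => hxy (h ▸ rfl)) (he b (Sym2.mem_mk_right a b)) hb
  · exact disjoint_left.1 (hdisj x (Ne.symm hx)) (he a (Sym2.mem_mk_left a b)) ha

theorem even_count_ribbonBlock_of_even_count_ribbonEdges {U : Finset (Fin d × Fin d)} {j : Fin d}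
    (hjj : (j, j) ∈ U) (hdisj : ∀ j', j ≠ j' → Disjoint (labelClass F j) (labelClass F j'))
    (heven : ∀ e, Even ((ribbonEdges ℓ d U F).count e)) (e : Sym2 α) :
    Even ((ribbonBlock F j j).count e) := by
  by_cases he : e ∈ ribbonBlock F j j
  · obtain ⟨a, ha, b, hb, rfl⟩ := exists_eq_of_mem_ribbonBlock F he
    have hlabels : ∀ c ∈ s(a, b), c ∈ labelClass F j := by
      rintro c hc
      rcases Sym2.mem_iff.1 hc with rfl | rfl <;> assumption
    have hcount := heven s(a, b)
    rwa [ribbonEdges_eq_sum_ribbonBlock, Multiset.count_sum', ← add_sum_erase _ _ hjj,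
      sum_eq_zero fun p hp => count_ribbonBlock_eq_zero F hdisj hlabels (ne_of_mem_erase hp),
      add_zero] at hcount
  · rw [Multiset.count_eq_zero.2 he]
    exact Even.zero

theorem labelClass_subset_image_diagonalWalk (j : Fin d) :
    labelClass F j ⊆ (range (2 * ℓ + 1)).image (diagonalWalk F j) := by
  intro a ha
  simp only [labelClass, mem_union, mem_image, mem_univ, true_and] at ha
  rcases ha with ⟨i, rfl⟩ | ⟨i, rfl⟩
  · exact mem_image.2 ⟨2 * i, mem_range.2 (by omega), by
      rw [diagonalWalk_two_mul, Fin.cast_val_eq_self]⟩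
  · exact mem_image.2 ⟨2 * i + 1, mem_range.2 (by omega), by
      rw [diagonalWalk_two_mul_add_one, Fin.cast_val_eq_self]⟩

theorem card_labelClass_le_of_even_count_ribbonBlock {j : Fin d}
    (heven : ∀ e, Even ((ribbonBlock F j j).count e)) : (labelClass F j).card ≤ ℓ + 1 := by
  have hedges := (ribbonBlock F j j).two_mul_card_toFinset_le_of_even_count heven
  rw [card_ribbonBlock] at hedges
  calc (labelClass F j).card ≤ ((range (2 * ℓ + 1)).image (diagonalWalk F j)).card :=
        card_le_card (labelClass_subset_image_diagonalWalk F j)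
    _ ≤ ((range (2 * ℓ)).image fun t =>
          s(diagonalWalk F j t, diagonalWalk F j (t + 1))).card + 1 :=
        card_image_range_succ_le_card_edges_add_one _ _
    _ ≤ (ribbonBlock F j j).toFinset.card + 1 := by
        gcongr
        intro e he
        obtain ⟨t, -, rfl⟩ := mem_image.1 he
        exact Multiset.mem_toFinset.2 (mem_ribbonBlock_of_diagonalWalk F j t)
    _ ≤ ℓ + 1 := by omega

end Ribbon

theorem sum_fin_ite_val_lt {d k : ℕ} (hk : k ≤ d) (a b : ℕ) :
    ∑ j : Fin d, (if (j : ℕ) < k then a else b) = k * a + (d - k) * b := by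
  have hlt : #{j : Fin d | (j : ℕ) < k} = k := by rw [Fin.card_filter_val_lt]; omega
  have hnlt := card_filter_add_card_filter_not (s := univ) fun j : Fin d => (j : ℕ) < k
  rw [card_univ, Fintype.card_fin, hlt] at hnlt
  rw [sum_ite, sum_const, sum_const, smul_eq_mul, smul_eq_mul, hlt,
    show #{j : Fin d | ¬(j : ℕ) < k} = d - k by omega]

theorem ribbon_unique_label_bound_general {α : Type*} [DecidableEq α]
    (ℓ d k : ℕ) [NeZero ℓ] (hk : k ≤ d)
    (U : Finset (Fin d × Fin d)) (F : Bool × Fin ℓ × Fin d → α)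
    (hU : ∀ j : Fin d, (j : ℕ) < k → (j, j) ∈ U)
    (hcontrib : ∀ e : Sym2 α, Even ((ribbonEdges ℓ d U F).count e))
    (hdisj : ∀ j j' : Fin d, (j : ℕ) < k → j ≠ j' →
      Disjoint
        ((Finset.univ.image fun i : Fin ℓ => F (true, i, j)) ∪
          (Finset.univ.image fun i : Fin ℓ => F (false, i, j)))
        ((Finset.univ.image fun i : Fin ℓ => F (true, i, j')) ∪
          (Finset.univ.image fun i : Fin ℓ => F (false, i, j')))) :
    ((Finset.univ : Finset (Bool × Fin ℓ × Fin d)).image F).card ≤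
      (2 * d - k) * ℓ + k := by
  have hclass : ∀ j : Fin d,
      (labelClass F j).card ≤ if (j : ℕ) < k then ℓ + 1 else 2 * ℓ := by
    intro j
    split_ifs with hj
    · exact card_labelClass_le_of_even_count_ribbonBlock F
        (even_count_ribbonBlock_of_even_count_ribbonEdges F (hU j hj) (hdisj j · hj) hcontrib)
    · exact card_labelClass_le F j
  calc (univ.image F).card ≤ ∑ j : Fin d, (labelClass F j).card :=
        card_image_le_sum_card_labelClass F
    _ ≤ ∑ j : Fin d, if (j : ℕ) < k then ℓ + 1 else 2 * ℓ := sum_le_sum fun j _ => hclass j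
    _ = k * (ℓ + 1) + (d - k) * (2 * ℓ) := sum_fin_ite_val_lt hk _ _
    _ = (2 * d - k) * ℓ + k := by
        obtain ⟨m, rfl⟩ := Nat.exists_eq_add_of_le hk
        rw [show 2 * (k + m) - k = k + 2 * m by omega, Nat.add_sub_cancel_left]
        ring

/-- Lemma 4.20: a contributing labeled `U`-ribbon of length `2ℓ`, where `U`
contains the edges `(1,1),…,(k,k)` and the label classes of the first `k`
coordinates and of the remaining coordinates are disjoint, has at most
`(2d − k)ℓ + k` distinct labels. -/
theorem ribbon_unique_label_bound {α : Type*} [DecidableEq α]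
    (ℓ d k : ℕ) [NeZero ℓ] (hk : k ≤ d)
    (U : Finset (Fin d × Fin d)) (F : Bool × Fin ℓ × Fin d → α)
    (hU : ∀ j : Fin d, (j : ℕ) < k → (j, j) ∈ U)
    (hlab : ∀ e ∈ ribbonEdges ℓ d U F, ¬ Sym2.IsDiag e)
    (hcontrib : ∀ e : Sym2 α, Even ((ribbonEdges ℓ d U F).count e))
    (hdisj : ∀ j j' : Fin d, (j : ℕ) < k → j ≠ j' →
      Disjoint
        ((Finset.univ.image fun i : Fin ℓ => F (true, i, j)) ∪
          (Finset.univ.image fun i : Fin ℓ => F (false, i, j)))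
        ((Finset.univ.image fun i : Fin ℓ => F (true, i, j')) ∪
          (Finset.univ.image fun i : Fin ℓ => F (false, i, j')))) :
    ((Finset.univ : Finset (Bool × Fin ℓ × Fin d)).image F).card ≤
      (2 * d - k) * ℓ + k :=
  ribbon_unique_label_bound_general ℓ d k hk U F hU hcontrib hdisj
end

section
/- If x ≥ 2, q ≥ 1, and n ≥ x²q(q+2), then the number of multisets S = {V₁,...,V_q} of x-element subsets of [n] such that for every j there exists i ≠ j with |V_i ∩ V_j| ≥ 2 is at most 2·n^{xq−q}·(x²/x!)^q. -/
/-!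
A multiset in which every member meets another one in at least two points splits as a
tree-ordered tuple `V₀, …, V_{k-1}` with `k ≥ 2` (every `V_j`, `j > 0`, meets an earlier `V_i` in
two points) plus a smaller multiset of the same kind: grow the tuple until no remaining member
meets it, and the remainder is then closed under the partner relation.
A tree-ordered `k`-tuple of `x`-sets is determined by `V₀` and, for each later `V_j`, an earlier
index, two shared points and `x - 2` further points, so there are at most
`(k-1)! C(n,x) (C(x,2) C(n,x-2))^(k-1) ≤ 2 (c/2)^k` of them, where `c = n^(x-1) x² / x!`,
provided `x² k ≤ n`. Hence the number `N q` of admissible multisets satisfies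
`N q ≤ ∑_{k ≥ 2} 2 (c/2)^k N (q - k)`, and `N q ≤ 2 c^q` follows by induction because
`∑_{k ≥ 2} 2^(-k) = 1/2`.
-/

open Finset
open scoped Nat

namespace IntersectingFamily

section TreeOrder

variable {β : Type*} (r : β → β → Prop)

def NoIsolated [DecidableEq β] (S : Multiset β) : Prop :=
  ∀ a ∈ S, ∃ b ∈ S.erase a, r a b

def IsTreeOrdered {k : ℕ} (T : Fin k → β) : Prop :=
  ∀ j : Fin k, (j : ℕ) ≠ 0 → ∃ i < j, r (T j) (T i)

variable {r}

lemma isTreeOrdered_snoc_iff {k : ℕ} {T : Fin k → β} {b : β} :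
    IsTreeOrdered r (Fin.snoc T b : Fin (k + 1) → β) ↔
      IsTreeOrdered r T ∧ (k ≠ 0 → ∃ i, r b (T i)) := by
  constructor
  · intro h
    refine ⟨fun j hj => ?_, fun hk => ?_⟩
    · obtain ⟨i, hij, hr⟩ := h j.castSucc hj
      obtain ⟨i, rfl⟩ :=
        Fin.exists_castSucc_eq.2 (hij.trans_le (Fin.castSucc_lt_last j).le).ne
      simp only [Fin.snoc_castSucc] at hr
      exact ⟨i, Fin.castSucc_lt_castSucc_iff.1 hij, hr⟩
    · obtain ⟨i, hi, hr⟩ := h (Fin.last k) hk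
      obtain ⟨i, rfl⟩ := Fin.exists_castSucc_eq.2 hi.ne
      simp only [Fin.snoc_castSucc, Fin.snoc_last] at hr
      exact ⟨i, hr⟩
  · rintro ⟨hT, hb⟩ j hj
    induction j using Fin.lastCases with
    | last =>
      obtain ⟨i, hr⟩ := hb hj
      exact ⟨i.castSucc, Fin.castSucc_lt_last i, by simpa using hr⟩
    | cast j =>
      obtain ⟨i, hij, hr⟩ := hT j hj
      exact ⟨i.castSucc, Fin.castSucc_lt_castSucc_iff.2 hij, by simpa using hr⟩

variable [DecidableEq β]

lemma exists_saturated_extension (R : Multiset β) {k : ℕ} (T : Fin k → β)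
    (hT : IsTreeOrdered r T) :
    ∃ (m : ℕ) (T' : Fin m → β) (R' : Multiset β), IsTreeOrdered r T' ∧ k ≤ m ∧
      ↑(List.ofFn T') + R' = ↑(List.ofFn T) + R ∧ ∀ a ∈ R', ∀ i, ¬ r a (T' i) := by
  induction R using Multiset.strongInductionOn generalizing k with
  | ih R ih =>
  by_cases h : ∃ a ∈ R, ∃ i, r a (T i)
  · obtain ⟨a, ha, i, hr⟩ := h
    obtain ⟨m, T', R', hT', hm, hsum, hsat⟩ := ih (R.erase a) (Multiset.erase_lt.2 ha)
      (Fin.snoc T a) (isTreeOrdered_snoc_iff.2 ⟨hT, fun _ => ⟨i, hr⟩⟩)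
    refine ⟨m, T', R', hT', by omega, ?_, hsat⟩
    rw [hsum, List.ofFn_succ_last]
    simp only [Fin.snoc_castSucc, Fin.snoc_last, ← Multiset.coe_add,
      Multiset.coe_singleton, add_assoc, Multiset.singleton_add, Multiset.cons_erase ha]
  · exact ⟨k, T, R, hT, le_rfl, rfl, fun a ha i hr => h ⟨a, ha, i, hr⟩⟩

lemma exists_isTreeOrdered_add {S : Multiset β} (hS : S ≠ 0) (h : NoIsolated r S) :
    ∃ k, 2 ≤ k ∧ ∃ (T : Fin k → β) (R : Multiset β),
      IsTreeOrdered r T ∧ NoIsolated r R ∧ ↑(List.ofFn T) + R = S := by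
  obtain ⟨a, ha⟩ := Multiset.exists_mem_of_ne_zero hS
  obtain ⟨b, hb, hab⟩ := h a ha
  have hpair : IsTreeOrdered r ![b, a] := by
    intro j hj
    fin_cases j
    · exact absurd rfl hj
    · exact ⟨0, Fin.zero_lt_one, hab⟩
  obtain ⟨m, T, R, hT, hm, hsum, hsat⟩ :=
    exists_saturated_extension ((S.erase a).erase b) _ hpair
  have hS : ↑(List.ofFn T) + R = S := by
    rw [hsum]
    change b ::ₘ a ::ₘ 0 + _ = S
    rw [Multiset.cons_swap, Multiset.cons_add, Multiset.cons_add, zero_add,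
      Multiset.cons_erase hb, Multiset.cons_erase ha]
  refine ⟨m, hm, T, R, hT, fun c hc => ?_, hS⟩
  obtain ⟨d, hd, hcd⟩ := h c (hS ▸ Multiset.mem_add.2 (Or.inr hc))
  rw [← hS, Multiset.erase_add_right_pos _ hc, Multiset.mem_add] at hd
  rcases hd with hd | hd
  · obtain ⟨i, rfl⟩ := List.mem_ofFn.1 (Multiset.mem_coe.1 hd)
    exact absurd hcd (hsat c hc i)
  · exact ⟨d, hd, hcd⟩

end TreeOrder

noncomputable def growthRate (n x : ℕ) : ℝ := n ^ (x - 1) * (x ^ 2 / x !)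

lemma growthRate_nonneg (n x : ℕ) : 0 ≤ growthRate n x := by
  unfold growthRate
  positivity

lemma two_mul_choose_mul_choose_mul_factorial_le {x : ℕ} (hx : 2 ≤ x) (n : ℕ) :
    2 * (x.choose 2 * n.choose (x - 2) : ℝ) * x ! ≤ x ^ 2 * x ^ 2 * n ^ (x - 2) := by
  obtain ⟨y, rfl⟩ := Nat.exists_eq_add_of_le' hx
  have hchoose : (n.choose y : ℝ) * y ! ≤ n ^ y :=
    (le_div_iff₀ (by positivity)).1 (Nat.choose_le_pow_div y n)
  have hfac : ((y + 2) ! : ℝ) = (y + 2) * (y + 1) * y ! := by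
    push_cast [Nat.factorial_succ]; ring
  rw [Nat.add_sub_cancel, hfac, Nat.cast_choose_two]
  push_cast
  calc 2 * ((y + 2) * (y + 2 - 1) / 2 * n.choose y) * ((y + 2) * (y + 1) * y ! : ℝ)
      = ((y + 2) * (y + 1)) ^ 2 * (n.choose y * y !) := by ring
    _ ≤ ((y + 2) * (y + 2)) ^ 2 * n ^ y := by gcongr; linarith
    _ = _ := by ring

lemma choose_mul_choose_mul_choose_le {x : ℕ} (hx : 2 ≤ x) (n : ℕ) :
    (n.choose x * (x.choose 2 * n.choose (x - 2)) : ℝ) ≤ growthRate n x ^ 2 / 2 := by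
  obtain ⟨y, rfl⟩ := Nat.exists_eq_add_of_le' hx
  have h1 : (n.choose (y + 2) : ℝ) ≤ n ^ (y + 2) / (y + 2) ! := Nat.choose_le_pow_div _ _
  have h2 := two_mul_choose_mul_choose_mul_factorial_le hx n
  have hf : (0 : ℝ) < (y + 2) ! := by positivity
  rw [Nat.add_sub_cancel, ← le_div_iff₀ hf] at h2
  push_cast at h2
  calc (n.choose (y + 2) * ((y + 2).choose 2 * n.choose (y + 2 - 2)) : ℝ)
      ≤ n ^ (y + 2) / (y + 2) ! * ((y + 2) ^ 2 * (y + 2) ^ 2 * n ^ y / (y + 2) ! / 2) := by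
        rw [Nat.add_sub_cancel]
        gcongr
        linarith
    _ = _ := by
        simp only [growthRate]
        push_cast
        field_simp
        ring

lemma mul_choose_mul_choose_le {x k : ℕ} (hx : 2 ≤ x) {n : ℕ} (hkn : x ^ 2 * k ≤ n) :
    (k * (x.choose 2 * n.choose (x - 2)) : ℝ) ≤ growthRate n x / 2 := by
  obtain ⟨y, rfl⟩ := Nat.exists_eq_add_of_le' hx
  have h2 := two_mul_choose_mul_choose_mul_factorial_le hx n
  have hf : (0 : ℝ) < (y + 2) ! := by positivity
  rw [Nat.add_sub_cancel, ← le_div_iff₀ hf] at h2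
  push_cast at h2
  have hkn : ((y : ℝ) + 2) ^ 2 * k ≤ n := by exact_mod_cast hkn
  calc (k * ((y + 2).choose 2 * n.choose (y + 2 - 2)) : ℝ)
      ≤ k * ((y + 2) ^ 2 * (y + 2) ^ 2 * n ^ y / (y + 2) ! / 2) := by
        rw [Nat.add_sub_cancel]
        gcongr
        linarith
    _ = ((y + 2) ^ 2 * k) * ((y + 2) ^ 2 * n ^ y / (y + 2) ! / 2) := by ring
    _ ≤ n * ((y + 2) ^ 2 * n ^ y / (y + 2) ! / 2) := by gcongr
    _ = _ := by
        simp only [growthRate]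
        push_cast
        ring

section Counting

variable {α : Type*} [Fintype α] [DecidableEq α]

lemma card_filter_two_le_card_inter_le (U : Finset α) (x : ℕ) :
    #{V ∈ powersetCard x univ | 2 ≤ #(V ∩ U)} ≤
      (#U).choose 2 * (Fintype.card α).choose (x - 2) := by
  calc #{V ∈ powersetCard x univ | 2 ≤ #(V ∩ U)}
      ≤ #((powersetCard 2 U ×ˢ powersetCard (x - 2) univ).image fun p => p.1 ∪ p.2) := by
        refine card_le_card fun V hV => ?_
        obtain ⟨hV, h2⟩ := mem_filter.1 hV
        obtain ⟨P, hPV, hP⟩ := exists_subset_card_eq h2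
        have hP' : P ⊆ V := hPV.trans inter_subset_left
        refine mem_image.2 ⟨(P, V \ P), mem_product.2 ⟨?_, ?_⟩, union_sdiff_of_subset hP'⟩
        · exact mem_powersetCard.2 ⟨hPV.trans inter_subset_right, hP⟩
        · rw [mem_powersetCard, card_sdiff_of_subset hP', (mem_powersetCard.1 hV).2, hP]
          exact ⟨subset_univ _, rfl⟩
    _ ≤ _ := by
        refine card_image_le.trans ?_
        rw [card_product, card_powersetCard, card_powersetCard, card_univ]

open Classical in
noncomputable def treeTuples (x k : ℕ) : Finset (Fin k → Finset α) :=
  {T | (∀ j, #(T j) = x) ∧ IsTreeOrdered (fun V W => 2 ≤ #(V ∩ W)) T}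

lemma mem_treeTuples {x k : ℕ} {T : Fin k → Finset α} :
    T ∈ treeTuples x k ↔ (∀ j, #(T j) = x) ∧ IsTreeOrdered (fun V W => 2 ≤ #(V ∩ W)) T := by
  simp [treeTuples]

lemma card_treeTuples_one_le (x : ℕ) :
    #(treeTuples (α := α) x 1) ≤ (Fintype.card α).choose x := by
  rw [← card_univ, ← card_powersetCard]
  refine card_le_card_of_injOn (fun T => T 0) (fun T hT => ?_) fun T _ T' _ h => ?_
  · simpa [mem_powersetCard] using (mem_treeTuples.1 hT).1 0
  · funext i
    rwa [Subsingleton.elim i 0]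

lemma card_treeTuples_succ_le (x : ℕ) {k : ℕ} (hk : k ≠ 0) :
    #(treeTuples (α := α) x (k + 1)) ≤
      #(treeTuples (α := α) x k) * (k * (x.choose 2 * (Fintype.card α).choose (x - 2))) := by
  set extensions : (Fin k → Finset α) → Finset (Finset α) := fun T =>
    univ.biUnion fun i => {V ∈ powersetCard x univ | 2 ≤ #(V ∩ T i)}
  have hext : ∀ T ∈ treeTuples x k,
      #(extensions T) ≤ k * (x.choose 2 * (Fintype.card α).choose (x - 2)) := by
    intro T hT
    calc #(extensions T) ≤ ∑ i, #{V ∈ powersetCard x univ | 2 ≤ #(V ∩ T i)} := card_biUnion_le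
      _ ≤ ∑ _i : Fin k, x.choose 2 * (Fintype.card α).choose (x - 2) := by
          gcongr with i
          simpa [(mem_treeTuples.1 hT).1 i] using card_filter_two_le_card_inter_le (T i) x
      _ = _ := by simp
  calc #(treeTuples x (k + 1))
      ≤ #((treeTuples x k).sigma extensions) := by
        refine card_le_card_of_injOn (fun T => ⟨Fin.init T, T (Fin.last k)⟩) (fun T hT => ?_) ?_
        · obtain ⟨hx, hT⟩ := mem_treeTuples.1 hT
          rw [← Fin.snoc_init_self T, isTreeOrdered_snoc_iff] at hT
          obtain ⟨i, hi⟩ := hT.2 hk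
          refine mem_sigma.2 ⟨mem_treeTuples.2 ⟨fun j => hx _, hT.1⟩, mem_biUnion.2 ⟨i, mem_univ _,
            mem_filter.2 ⟨mem_powersetCard.2 ⟨subset_univ _, hx _⟩, hi⟩⟩⟩
        · intro T _ T' _ h
          simp only [Sigma.mk.injEq] at h
          rw [← Fin.snoc_init_self T, ← Fin.snoc_init_self T', h.1, eq_of_heq h.2]
    _ ≤ _ := by
        rw [card_sigma, ← smul_eq_mul]
        exact sum_le_card_nsmul _ _ _ hext

lemma card_treeTuples_le {x : ℕ} (hx : 2 ≤ x) {k : ℕ} (hk : 2 ≤ k)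
    (hkn : x ^ 2 * (k - 1) ≤ Fintype.card α) :
    (#(treeTuples (α := α) x k) : ℝ) ≤ 2 * (growthRate (Fintype.card α) x / 2) ^ k := by
  set n := Fintype.card α
  induction k, hk using Nat.le_induction with
  | base =>
    have h := card_treeTuples_succ_le (α := α) x one_ne_zero
    have h1 := card_treeTuples_one_le (α := α) x
    calc (#(treeTuples (α := α) x 2) : ℝ)
        ≤ n.choose x * (1 * (x.choose 2 * n.choose (x - 2))) := by
          exact_mod_cast h.trans (Nat.mul_le_mul_right _ h1)
      _ ≤ growthRate n x ^ 2 / 2 := by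
          simpa using choose_mul_choose_mul_choose_le hx n
      _ = _ := by ring
  | succ k hk ih =>
    have h := card_treeTuples_succ_le (α := α) x (k := k) (by omega)
    calc (#(treeTuples (α := α) x (k + 1)) : ℝ)
        ≤ #(treeTuples (α := α) x k) * (k * (x.choose 2 * n.choose (x - 2))) := by
          exact_mod_cast h
      _ ≤ 2 * (growthRate n x / 2) ^ k * (growthRate n x / 2) := by
          have hc := growthRate_nonneg n x
          refine mul_le_mul ?_ ?_ (by positivity) (by positivity)
          · exact ih (le_trans (Nat.mul_le_mul_left _ (by omega)) hkn)
          · exact mul_choose_mul_choose_le hx (by simpa using hkn)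
      _ = _ := by ring

def families (x q : ℕ) : Set (Multiset (Finset α)) :=
  {S | Multiset.card S = q ∧ (∀ V ∈ S, #V = x) ∧ NoIsolated (fun V W => 2 ≤ #(V ∩ W)) S}

instance (x q : ℕ) : Finite (families (α := α) x q) :=
  Finite.of_injective (fun S : families x q => Sym.mk S.1 S.2.1)
    fun _ _ h => Subtype.ext (congrArg ((↑) : Sym (Finset α) q → Multiset (Finset α)) h)

lemma card_families_le_sum {x q : ℕ} (hq : q ≠ 0) :
    Nat.card (families (α := α) x q) ≤
      ∑ k ∈ Icc 2 q, #(treeTuples (α := α) x k) * Nat.card (families (α := α) x (q - k)) := by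
  let f : (Σ k : Icc 2 q, treeTuples (α := α) x k × families (α := α) x (q - k)) →
      Multiset (Finset α) := fun p => ↑(List.ofFn p.2.1.1) + p.2.2.1
  have hsub : families x q ⊆ Set.range f := by
    rintro S ⟨hcard, hsize, hS⟩
    obtain ⟨k, hk, T, R, hT, hR, rfl⟩ :=
      exists_isTreeOrdered_add (by rintro rfl; exact hq hcard.symm) hS
    have hkq : k + Multiset.card R = q := by simpa using hcard
    refine ⟨⟨⟨k, mem_Icc.2 ⟨hk, by omega⟩⟩, ⟨T, mem_treeTuples.2 ⟨fun j => hsize _ ?_, hT⟩⟩,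
      ⟨R, show Multiset.card R = q - k by omega, fun V hV => hsize V ?_, hR⟩⟩, rfl⟩
    · exact Multiset.mem_add.2 (Or.inl (Multiset.mem_coe.2 (List.mem_ofFn.2 ⟨j, rfl⟩)))
    · exact Multiset.mem_add.2 (Or.inr hV)
  calc Nat.card (families x q)
      ≤ Nat.card (Set.range f) := Nat.card_mono (Set.finite_range f) hsub
    _ ≤ _ := Finite.card_range_le f
    _ = _ := by
      rw [Nat.card_sigma, ← sum_coe_sort (Icc 2 q)]
      simp only [Nat.card_prod, Nat.card_eq_finsetCard]

lemma card_families_zero_le_one (x : ℕ) : Nat.card (families (α := α) x 0) ≤ 1 :=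
  Finite.card_le_one_iff_subsingleton.2
    ⟨fun S T => Subtype.ext
      ((Multiset.card_eq_zero.1 S.2.1).trans (Multiset.card_eq_zero.1 T.2.1).symm)⟩

theorem card_families_le {x : ℕ} (hx : 2 ≤ x) (q : ℕ) (hn : x ^ 2 * q ≤ Fintype.card α) :
    (Nat.card (families (α := α) x q) : ℝ) ≤ 2 * growthRate (Fintype.card α) x ^ q := by
  induction q using Nat.strong_induction_on with
  | _ q ih =>
  set c := growthRate (Fintype.card α) x
  have hc : 0 ≤ c := growthRate_nonneg _ x
  rcases eq_or_ne q 0 with rfl | hq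
  · have h : (Nat.card (families (α := α) x 0) : ℝ) ≤ 1 := by
      exact_mod_cast card_families_zero_le_one x
    linarith [pow_zero c]
  calc (Nat.card (families (α := α) x q) : ℝ)
      ≤ ∑ k ∈ Icc 2 q,
          (#(treeTuples (α := α) x k) : ℝ) * Nat.card (families (α := α) x (q - k)) := by
        exact_mod_cast card_families_le_sum hq
    _ ≤ ∑ k ∈ Icc 2 q, 2 * (c / 2) ^ k * (2 * c ^ (q - k)) := by
        refine sum_le_sum fun k hk => ?_
        obtain ⟨hk2, hkq⟩ := mem_Icc.1 hk
        refine mul_le_mul ?_ ?_ (by positivity) (by positivity)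
        · exact card_treeTuples_le hx hk2 (le_trans (Nat.mul_le_mul_left _ (by omega)) hn)
        · exact ih _ (by omega) (le_trans (Nat.mul_le_mul_left _ (by omega)) hn)
    _ = 4 * c ^ q * ∑ k ∈ Ico 2 (q + 1), (1 / 2 : ℝ) ^ k := by
        rw [Ico_add_one_right_eq_Icc, mul_sum]
        refine sum_congr rfl fun k hk => ?_
        rw [← pow_mul_pow_sub c (mem_Icc.1 hk).2]
        ring
    _ ≤ 4 * c ^ q * ((1 / 2) ^ 2 / (1 - 1 / 2)) := by
        gcongr
        exact geom_sum_Ico_le_of_lt_one (by norm_num) (by norm_num)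
    _ = 2 * c ^ q := by ring

end Counting

end IntersectingFamily

open IntersectingFamily in
theorem count_intersecting_multisets_general (n x q : ℕ) (hx : 2 ≤ x)
    (hn : x ^ 2 * q * (q + 2) ≤ n) :
    (Nat.card {S : Multiset (Finset (Fin n)) //
        Multiset.card S = q ∧ (∀ V ∈ S, V.card = x) ∧
        ∀ V ∈ S, ∃ W ∈ S.erase V, 2 ≤ (V ∩ W).card} : ℝ) ≤
      2 * (n : ℝ) ^ (x * q - q) * ((x : ℝ) ^ 2 / (x.factorial : ℝ)) ^ q := by
  have h := card_families_le (α := Fin n) hx q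
    ((Nat.le_mul_of_pos_right _ (Nat.succ_pos _)).trans (by simpa using hn))
  rw [Fintype.card_fin, growthRate, mul_pow, ← pow_mul, ← mul_assoc, Nat.sub_one_mul] at h
  exact h

/-- Lemma: if `x ≥ 2`, `q ≥ 1` and `n ≥ x²q(q+2)`, then the number of
multisets `S = {V₁,…,V_q}` of `x`-element subsets of `[n]` such that every
member shares at least `2` elements with some other member is at most
`2·n^{xq−q}·(x²/x!)^q`. -/
theorem count_intersecting_multisets (n x q : ℕ) (hx : 2 ≤ x) (hq : 1 ≤ q)
    (hn : x ^ 2 * q * (q + 2) ≤ n) :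
    (Nat.card {S : Multiset (Finset (Fin n)) //
        Multiset.card S = q ∧ (∀ V ∈ S, V.card = x) ∧
        ∀ V ∈ S, ∃ W ∈ S.erase V, 2 ≤ (V ∩ W).card} : ℝ) ≤
      2 * (n : ℝ) ^ (x * q - q) * ((x : ℝ) ^ 2 / (x.factorial : ℝ)) ^ q :=
  count_intersecting_multisets_general n x q hx hn
end

section
/- For any x,k ≥ 2 and n ≥ x, the number of multisets S = {V₁,...,V_k} of x-element subsets of [n] whose constraint graph H_S is connected is at most n^{kx−2k+2}·k!·(2/x⁴)·(x⁴/(2·x!))^k, where H_S has vertex set {V₁,...,V_k} and edges between V_i, V_j whenever |V_i ∩ V_j| ≥ 2. -/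
/-!
Order the members of a connected multiset so that each one shares two elements with an earlier
one (grow the ordered part across a cut). Such an ordering is determined by the first set, an
x-subset of [n], and, for the (i+1)-st set, by the index of an earlier neighbour (i choices), the
two shared elements inside that neighbour (C(x,2) choices) and the remaining x-2 elements
(at most C(n,x-2) choices). This gives at most C(n,x)·(k-1)!·(C(x,2)·C(n,x-2))^(k-1) connected
multisets, and C(n,r) ≤ n^r/r! turns this into the stated bound.
-/

/-- A multiset `S` of finsets has a connected constraint graph (where two
members are adjacent iff they share at least two elements) iff every split
of `S` into two nonempty sub-multisets has a crossing pair intersecting in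
at least two elements. -/
def ConstraintGraphConnected {n : ℕ} (S : Multiset (Finset (Fin n))) : Prop :=
  ∀ S₁ S₂ : Multiset (Finset (Fin n)), S₁ + S₂ = S → S₁ ≠ 0 → S₂ ≠ 0 →
    ∃ V ∈ S₁, ∃ W ∈ S₂, 2 ≤ (V ∩ W).card

open Finset Nat

section Explorations

variable {α : Type*} [Fintype α] [DecidableEq α]

theorem card_filter_powersetCard_le_card_inter_le (V : Finset α) (x s : ℕ) :
    #{W ∈ powersetCard x (univ : Finset α) | s ≤ #(W ∩ V)} ≤
      (#V).choose s * (Fintype.card α).choose (x - s) := by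
  have hsub : {W ∈ powersetCard x (univ : Finset α) | s ≤ #(W ∩ V)} ⊆
      (powersetCard s V ×ˢ powersetCard (x - s) univ).image fun p => p.1 ∪ p.2 := by
    intro W hW
    rw [mem_filter, mem_powersetCard] at hW
    obtain ⟨⟨-, hWx⟩, hWV⟩ := hW
    obtain ⟨P, hPWV, hPs⟩ := exists_subset_card_eq hWV
    have hPW : P ⊆ W := hPWV.trans inter_subset_left
    refine mem_image.2 ⟨(P, W \ P), ?_, union_sdiff_of_subset hPW⟩
    simp only [mem_product, mem_powersetCard, subset_univ, true_and]
    exact ⟨⟨hPWV.trans inter_subset_right, hPs⟩, by rw [card_sdiff_of_subset hPW, hWx, hPs]⟩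
  calc _ ≤ _ := card_le_card hsub
    _ ≤ _ := card_image_le
    _ = _ := by rw [card_product, card_powersetCard, card_powersetCard, Finset.card_univ]

variable (α) in
def constraintNeighbours (x : ℕ) (V : Finset α) : Finset (Finset α) :=
  {W ∈ powersetCard x univ | 2 ≤ #(W ∩ V)}

variable (α) in
/-- Lists are built newest-first: each entry but the last meets a later entry in at least two
elements. -/
def explorations (x : ℕ) : ℕ → Finset (List (Finset α))
  | 0 => {[]}
  | 1 => (powersetCard x univ).image ([·])
  | m + 2 => (explorations x (m + 1)).biUnion fun L =>
      (L.toFinset.biUnion (constraintNeighbours α x)).image (· :: L)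

theorem length_eq_and_card_eq_of_mem_explorations {x : ℕ} :
    ∀ {m : ℕ} {L : List (Finset α)}, L ∈ explorations α x m →
      L.length = m ∧ ∀ V ∈ L, #V = x
  | 0, L, h => by simp_all [explorations]
  | 1, L, h => by
    obtain ⟨V, hV, rfl⟩ := mem_image.1 h
    simp_all
  | m + 2, L, h => by
    simp only [explorations, mem_biUnion, mem_image, constraintNeighbours, mem_filter,
      mem_powersetCard] at h
    obtain ⟨L₀, hL₀, W, ⟨V, -, ⟨-, hW⟩, -⟩, rfl⟩ := h
    obtain ⟨hlen, hcard⟩ := length_eq_and_card_eq_of_mem_explorations hL₀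
    simp_all

theorem cons_mem_explorations {x m : ℕ} {L : List (Finset α)}
    (hL : L ∈ explorations α x (m + 1)) {V W : Finset α} (hV : V ∈ L) (hW : #W = x)
    (hVW : 2 ≤ #(V ∩ W)) :
    W :: L ∈ explorations α x (m + 2) := by
  simp only [explorations, mem_biUnion, mem_image, constraintNeighbours, mem_filter,
    mem_powersetCard, List.mem_toFinset]
  exact ⟨L, hL, W, ⟨V, hV, ⟨subset_univ W, hW⟩, by rwa [inter_comm]⟩, rfl⟩

theorem card_explorations_le (x m : ℕ) :
    #(explorations α x (m + 1)) ≤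
      (Fintype.card α).choose x * m ! * (x.choose 2 * (Fintype.card α).choose (x - 2)) ^ m := by
  induction m with
  | zero =>
    calc _ ≤ #(powersetCard x (univ : Finset α)) := card_image_le
      _ = _ := by simp
  | succ m ih =>
    set c := x.choose 2 * (Fintype.card α).choose (x - 2)
    have hstep : ∀ L ∈ explorations α x (m + 1),
        #((L.toFinset.biUnion (constraintNeighbours α x)).image (· :: L)) ≤ (m + 1) * c := by
      intro L hL
      obtain ⟨hlen, hcard⟩ := length_eq_and_card_eq_of_mem_explorations hL
      calc _ ≤ #(L.toFinset.biUnion (constraintNeighbours α x)) := card_image_le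
        _ ≤ ∑ V ∈ L.toFinset, #(constraintNeighbours α x V) := card_biUnion_le
        _ ≤ ∑ V ∈ L.toFinset, c := sum_le_sum fun V hV => by
          have := card_filter_powersetCard_le_card_inter_le V x 2
          rwa [hcard V (List.mem_toFinset.1 hV)] at this
        _ ≤ (m + 1) * c := by
          rw [sum_const, smul_eq_mul, ← hlen]
          exact Nat.mul_le_mul_right c (List.toFinset_card_le L)
    calc _ ≤ ∑ L ∈ explorations α x (m + 1), (m + 1) * c :=
          card_biUnion_le.trans (sum_le_sum hstep)
      _ = #(explorations α x (m + 1)) * ((m + 1) * c) := by rw [sum_const, smul_eq_mul]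
      _ ≤ (Fintype.card α).choose x * m ! * c ^ m * ((m + 1) * c) := Nat.mul_le_mul_right _ ih
      _ = _ := by rw [factorial_succ, pow_succ]; ring

end Explorations

theorem exists_mem_explorations_coe_eq {n x : ℕ} {S : Multiset (Finset (Fin n))}
    (hS : ConstraintGraphConnected S) (hSx : ∀ V ∈ S, #V = x) {m : ℕ}
    {L : List (Finset (Fin n))} (hL : L ∈ explorations (Fin n) x (m + 1))
    (hLS : (L : Multiset (Finset (Fin n))) ≤ S) :
    ∃ L' ∈ explorations (Fin n) x (Multiset.card S), (L' : Multiset (Finset (Fin n))) = S := by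
  have hlen := (length_eq_and_card_eq_of_mem_explorations hL).1
  by_cases hLS' : (L : Multiset (Finset (Fin n))) = S
  · exact ⟨L, by rwa [← hLS', Multiset.coe_card, hlen], hLS'⟩
  have hm : m + 1 < Multiset.card S := by
    rw [← hlen, ← Multiset.coe_card]
    exact Multiset.card_lt_card (lt_of_le_of_ne hLS hLS')
  obtain ⟨V, hV, W, hW, hVW⟩ := hS L (S - L) (add_tsub_cancel_of_le hLS)
    (by rw [Ne, Multiset.coe_eq_zero]; rintro rfl; simp at hlen)
    (fun h => hLS' (le_antisymm hLS (tsub_eq_zero_iff_le.1 h)))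
  have hWL : ((W :: L : List (Finset (Fin n))) : Multiset (Finset (Fin n))) ≤ S :=
    calc ((W :: L : List (Finset (Fin n))) : Multiset (Finset (Fin n))) = {W} + L := by
          rw [Multiset.singleton_add, Multiset.cons_coe]
      _ ≤ (S - L) + L := add_le_add (Multiset.singleton_le.2 hW) le_rfl
      _ = S := tsub_add_cancel_of_le hLS
  exact exists_mem_explorations_coe_eq hS hSx
    (cons_mem_explorations hL hV (hSx W (Multiset.mem_of_le tsub_le_self hW)) hVW) hWL
termination_by Multiset.card S - m

theorem card_connected_le_card_explorations {n x k : ℕ} (hk : 1 ≤ k) :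
    Nat.card {S : Multiset (Finset (Fin n)) //
        Multiset.card S = k ∧ (∀ V ∈ S, #V = x) ∧ ConstraintGraphConnected S} ≤
      #(explorations (Fin n) x k) := by
  have hpre : ∀ S : {S : Multiset (Finset (Fin n)) //
      Multiset.card S = k ∧ (∀ V ∈ S, #V = x) ∧ ConstraintGraphConnected S},
      ∃ L ∈ explorations (Fin n) x k, (L : Multiset (Finset (Fin n))) = S.1 := by
    rintro ⟨S, rfl, hSx, hS⟩
    obtain ⟨V, hV⟩ := Multiset.exists_mem_of_ne_zero (Multiset.card_pos.1 hk)
    refine exists_mem_explorations_coe_eq hS hSx (m := 0) (L := [V]) ?_ (by simpa using hV)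
    exact mem_image_of_mem _ (mem_powersetCard_univ.2 (hSx V hV))
  choose f hf hfS using hpre
  calc _ ≤ Nat.card (explorations (Fin n) x k) :=
        Nat.card_le_card_of_injective (fun S => ⟨f S, hf S⟩) fun S T h => Subtype.ext <| by
          rw [← hfS S, ← hfS T, show f S = f T from congrArg Subtype.val h]
    _ = _ := Nat.card_eq_finsetCard _

theorem choose_two_mul_two_mul_factorial_le {x : ℕ} (hx : 2 ≤ x) :
    x.choose 2 * 2 * x ! ≤ x ^ 4 * (x - 2)! := by
  have hfac := choose_mul_factorial_mul_factorial hx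
  have hdesc : x.choose 2 * 2 ≤ x ^ 2 := by
    have := descFactorial_le_pow x 2
    rwa [descFactorial_eq_factorial_mul_choose, factorial_two, mul_comm] at this
  calc x.choose 2 * 2 * x ! = (x.choose 2 * 2) ^ 2 * (x - 2)! := by
        rw [← hfac, factorial_two]; ring
    _ ≤ (x ^ 2) ^ 2 * (x - 2)! := by gcongr
    _ = x ^ 4 * (x - 2)! := by ring

theorem choose_mul_factorial_mul_pow_le (n : ℕ) {x : ℕ} (hx : 2 ≤ x) (m : ℕ) :
    ((n.choose x * m ! * (x.choose 2 * n.choose (x - 2)) ^ m : ℕ) : ℝ) ≤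
      (n : ℝ) ^ ((m + 1) * x - 2 * (m + 1) + 2) * ((m + 1)! : ℝ) * (2 / (x : ℝ) ^ 4) *
        ((x : ℝ) ^ 4 / (2 * (x ! : ℝ))) ^ (m + 1) := by
  set q : ℝ := (x : ℝ) ^ 4 / (2 * (x ! : ℝ))
  have hchoose : (n.choose x : ℝ) ≤ n ^ x / x ! := choose_le_pow_div x n
  have hchoose_two : ((x.choose 2 : ℕ) : ℝ) / ((x - 2)! : ℕ) ≤ q := by
    rw [div_le_div_iff₀ (by positivity) (by positivity)]
    exact_mod_cast (mul_assoc _ _ _).symm.le.trans (choose_two_mul_two_mul_factorial_le hx)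
  have hstep : ((x.choose 2 * n.choose (x - 2) : ℕ) : ℝ) ≤ n ^ (x - 2) * q :=
    calc ((x.choose 2 * n.choose (x - 2) : ℕ) : ℝ)
        ≤ x.choose 2 * (n ^ (x - 2) / (x - 2)!) := by
          push_cast; gcongr; exact choose_le_pow_div _ _
      _ = n ^ (x - 2) * (((x.choose 2 : ℕ) : ℝ) / ((x - 2)! : ℕ)) := by ring
      _ ≤ n ^ (x - 2) * q := by gcongr
  have hfac : (m ! : ℝ) ≤ (m + 1)! := by exact_mod_cast factorial_le (le_succ m)
  have hexp : (m + 1) * x - 2 * (m + 1) + 2 = x + m * (x - 2) := by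
    obtain ⟨a, rfl⟩ : ∃ a, x = a + 2 := ⟨x - 2, by omega⟩
    rw [Nat.add_sub_cancel, show (m + 1) * (a + 2) = (m + 1) * a + 2 * (m + 1) by ring,
      Nat.add_sub_cancel]
    ring
  calc ((n.choose x * m ! * (x.choose 2 * n.choose (x - 2)) ^ m : ℕ) : ℝ)
      = n.choose x * m ! * ((x.choose 2 * n.choose (x - 2) : ℕ) : ℝ) ^ m := by push_cast; ring
    _ ≤ n ^ x / x ! * (m + 1)! * (n ^ (x - 2) * q) ^ m := by gcongr
    _ = _ := by
      have hq : 2 / (x : ℝ) ^ 4 * q = 1 / x ! := by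
        have : (x : ℝ) ≠ 0 := by positivity
        simp only [q]
        field_simp
      clear_value q
      rw [hexp, pow_add, pow_mul', mul_pow, pow_succ]
      linear_combination (-(n : ℝ) ^ x * ((n : ℝ) ^ (x - 2)) ^ m * (m + 1)! * q ^ m) * hq

theorem count_connected_multisets_general (n x k : ℕ) (hx : 2 ≤ x) (hk : 2 ≤ k) :
    (Nat.card {S : Multiset (Finset (Fin n)) //
        Multiset.card S = k ∧ (∀ V ∈ S, V.card = x) ∧
        ConstraintGraphConnected S} : ℝ) ≤
      (n : ℝ) ^ (k * x - 2 * k + 2) * (k.factorial : ℝ) *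
        (2 / (x : ℝ) ^ 4) *
        ((x : ℝ) ^ 4 / (2 * (x.factorial : ℝ))) ^ k := by
  obtain ⟨m, rfl⟩ : ∃ m, k = m + 1 := ⟨k - 1, by omega⟩
  calc _ ≤ (#(explorations (Fin n) x (m + 1)) : ℝ) := by
        exact_mod_cast card_connected_le_card_explorations (by omega)
    _ ≤ ((n.choose x * m ! * (x.choose 2 * n.choose (x - 2)) ^ m : ℕ) : ℝ) := by
        exact_mod_cast Fintype.card_fin n ▸ card_explorations_le x m
    _ ≤ _ := choose_mul_factorial_mul_pow_le n hx m

/-- Lemma: for `x, k ≥ 2` and `n ≥ x`, the number of multisets of `k`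
`x`-element subsets of `[n]` whose constraint graph is connected is at most
`n^{kx−2k+2}·k!·(2/x⁴)·(x⁴/(2·x!))^k`. -/
theorem count_connected_multisets (n x k : ℕ) (hx : 2 ≤ x) (hk : 2 ≤ k)
    (hn : x ≤ n) :
    (Nat.card {S : Multiset (Finset (Fin n)) //
        Multiset.card S = k ∧ (∀ V ∈ S, V.card = x) ∧
        ConstraintGraphConnected S} : ℝ) ≤
      (n : ℝ) ^ (k * x - 2 * k + 2) * (k.factorial : ℝ) *
        (2 / (x : ℝ) ^ 4) *
        ((x : ℝ) ^ 4 / (2 * (x.factorial : ℝ))) ^ k :=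
  count_connected_multisets_general n x k hx hk
end

section
/- Let 0 ≤ i ≤ d and let Q be a real matrix indexed by (d−i)-subsets of [n] with Q(I,J) = 0 whenever I ∩ J ≠ ∅, and define the lift Q^{(i)}, a matrix indexed by d-subsets of [n], by Q^{(i)}(I,J) = Q(I∖(I∩J), J∖(I∩J)) if |I∩J| = i and 0 otherwise. Then ‖Q^{(i)}‖ ≤ C(d,i)²·‖Q‖. -/
/-- The type of `d`-element subsets of `[n]`. -/
abbrev SS (n d : ℕ) := {s : Finset (Fin n) // s.card = d}

/-- The `i`-th lift of a matrix `X` indexed by `(d−i)`-subsets: the entry at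
`(I,J)` is `X(I∖(I∩J), J∖(I∩J))` if `|I∩J| = i`, and `0` otherwise. -/
noncomputable def liftMatrix {n d i : ℕ}
    (X : Matrix (SS n (d - i)) (SS n (d - i)) ℝ) :
    Matrix (SS n d) (SS n d) ℝ :=
  fun I J =>
    if h : (I.val ∩ J.val).card = i then
      X ⟨I.val \ J.val, by
          have h1 := Finset.card_inter_add_card_sdiff I.val J.val
          have h2 := I.2
          omega⟩
        ⟨J.val \ I.val, by
          have h1 := Finset.card_inter_add_card_sdiff J.val I.val
          have h3 : (J.val ∩ I.val).card = i := by
            rw [Finset.inter_comm]; exact h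
          have h2 := J.2
          omega⟩
    else 0

private lemma card_union_aux {n d i : ℕ} (hi : i ≤ d) {A S : Finset (Fin n)}
    (hA : A.card = d - i) (hS : S.card = i) (h : Disjoint A S) : (A ∪ S).card = d := by
  rw [Finset.card_union_of_disjoint h]; omega

/-- The restriction `x^S` of a vector indexed by `d`-sets to `(d-i)`-sets. -/
noncomputable def resVec {n d i : ℕ} (hi : i ≤ d) (S : SS n i) (x : SS n d → ℝ) :
    SS n (d - i) → ℝ :=
  fun A => if h : Disjoint A.val S.val then
    x ⟨A.val ∪ S.val, card_union_aux hi A.2 S.2 h⟩ else 0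

private lemma tri_aux {n : ℕ} {A B S : Finset (Fin n)}
    (hAS : Disjoint A S) (hBS : Disjoint B S) (hAB : Disjoint A B) :
    (A ∪ S) ∩ (B ∪ S) = S ∧ (A ∪ S) \ (B ∪ S) = A ∧ (B ∪ S) \ (A ∪ S) = B := by
  rw [Finset.disjoint_left] at hAS hBS hAB
  refine ⟨?_, ?_, ?_⟩ <;> ext a <;>
    · have h1 := @hAS a; have h2 := @hBS a; have h3 := @hAB a
      simp only [Finset.mem_inter, Finset.mem_union, Finset.mem_sdiff, not_or]
      tauto

/-- Reindexing: the bilinear form of the lift decomposes over `i`-subsets `S`. -/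
lemma sum_lift_eq {n d i : ℕ} (hi : i ≤ d)
    (X : Matrix (SS n (d - i)) (SS n (d - i)) ℝ)
    (hX : ∀ I' J' : SS n (d - i), I'.val ∩ J'.val ≠ ∅ → X I' J' = 0)
    (x y : SS n d → ℝ) :
    ∑ I : SS n d, ∑ J : SS n d, x I * liftMatrix X I J * y J
      = ∑ S : SS n i, ∑ A : SS n (d - i), ∑ B : SS n (d - i),
          resVec hi S x A * X A B * resVec hi S y B := by
  classical
  have lhs_eq : ∑ I : SS n d, ∑ J : SS n d, x I * liftMatrix X I J * y J
      = ∑ p ∈ Finset.univ.filter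
          (fun p : SS n d × SS n d => (p.1.val ∩ p.2.val).card = i),
          x p.1 * liftMatrix X p.1 p.2 * y p.2 := by
    have e1 : ∑ p : SS n d × SS n d, x p.1 * liftMatrix X p.1 p.2 * y p.2
        = ∑ I : SS n d, ∑ J : SS n d, x I * liftMatrix X I J * y J :=
      Fintype.sum_prod_type _
    rw [← e1, Finset.sum_filter_of_ne]
    intro p _ hp
    by_contra hc
    exact hp (by simp [liftMatrix, dif_neg hc])
  have rhs_eq : ∑ S : SS n i, ∑ A : SS n (d - i), ∑ B : SS n (d - i),
          resVec hi S x A * X A B * resVec hi S y B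
      = ∑ q ∈ Finset.univ.filter
          (fun q : SS n i × SS n (d - i) × SS n (d - i) =>
            Disjoint q.2.1.val q.1.val ∧ Disjoint q.2.2.val q.1.val ∧
              Disjoint q.2.1.val q.2.2.val),
          resVec hi q.1 x q.2.1 * X q.2.1 q.2.2 * resVec hi q.1 y q.2.2 := by
    have e2 : ∑ q : SS n i × SS n (d - i) × SS n (d - i),
          resVec hi q.1 x q.2.1 * X q.2.1 q.2.2 * resVec hi q.1 y q.2.2
        = ∑ S : SS n i, ∑ r : SS n (d - i) × SS n (d - i),
            resVec hi S x r.1 * X r.1 r.2 * resVec hi S y r.2 :=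
      Fintype.sum_prod_type _
    have e3 : ∀ S : SS n i, ∑ r : SS n (d - i) × SS n (d - i),
            resVec hi S x r.1 * X r.1 r.2 * resVec hi S y r.2
        = ∑ A : SS n (d - i), ∑ B : SS n (d - i),
            resVec hi S x A * X A B * resVec hi S y B :=
      fun S => Fintype.sum_prod_type _
    have filter_eq : ∑ q ∈ Finset.univ.filter
          (fun q : SS n i × SS n (d - i) × SS n (d - i) =>
            Disjoint q.2.1.val q.1.val ∧ Disjoint q.2.2.val q.1.val ∧
              Disjoint q.2.1.val q.2.2.val),
          resVec hi q.1 x q.2.1 * X q.2.1 q.2.2 * resVec hi q.1 y q.2.2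
        = ∑ q : SS n i × SS n (d - i) × SS n (d - i),
          resVec hi q.1 x q.2.1 * X q.2.1 q.2.2 * resVec hi q.1 y q.2.2 := by
      apply Finset.sum_filter_of_ne
      intro q _ hq
      refine ⟨?_, ?_, ?_⟩
      · by_contra hc
        exact hq (by simp [resVec, dif_neg hc])
      · by_contra hc
        exact hq (by simp [resVec, dif_neg hc])
      · by_contra hc
        rw [Finset.not_disjoint_iff_nonempty_inter] at hc
        exact hq (by simp [hX _ _ (by
          intro h; rw [h] at hc; exact Finset.not_nonempty_empty hc)])
    rw [filter_eq, e2]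
    apply Finset.sum_congr rfl; intro S _; exact (e3 S).symm
  rw [lhs_eq, rhs_eq]
  refine (Finset.sum_bij'
    (fun (q : SS n i × SS n (d - i) × SS n (d - i)) hq =>
      ((⟨q.2.1.val ∪ q.1.val, card_union_aux hi q.2.1.2 q.1.2
          (Finset.mem_filter.mp hq).2.1⟩ : SS n d),
       (⟨q.2.2.val ∪ q.1.val, card_union_aux hi q.2.2.2 q.1.2
          (Finset.mem_filter.mp hq).2.2.1⟩ : SS n d)))
    (fun (p : SS n d × SS n d) hp =>
      ((⟨p.1.val ∩ p.2.val, (Finset.mem_filter.mp hp).2⟩ : SS n i),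
       (⟨p.1.val \ p.2.val, by
          have h1 := Finset.card_inter_add_card_sdiff p.1.val p.2.val
          have h2 := p.1.2
          have h := (Finset.mem_filter.mp hp).2
          omega⟩ : SS n (d - i)),
       (⟨p.2.val \ p.1.val, by
          have h1 := Finset.card_inter_add_card_sdiff p.2.val p.1.val
          have h3 : (p.2.val ∩ p.1.val).card = i := by
            rw [Finset.inter_comm]; exact (Finset.mem_filter.mp hp).2
          have h2 := p.2.2
          omega⟩ : SS n (d - i))))
    ?hi ?hj ?li ?ri ?h).symm
  case hi =>
    intro q hq
    obtain ⟨-, h1, h2, h3⟩ := Finset.mem_filter.mp hq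
    refine Finset.mem_filter.mpr ⟨Finset.mem_univ _, ?_⟩
    show ((q.2.1.val ∪ q.1.val) ∩ (q.2.2.val ∪ q.1.val)).card = i
    rw [(tri_aux h1 h2 h3).1, q.1.2]
  case hj =>
    intro p hp
    refine Finset.mem_filter.mpr ⟨Finset.mem_univ _, ?_, ?_, ?_⟩ <;>
      · show Disjoint _ _
        rw [Finset.disjoint_left]
        intro a ha hb
        simp only [Finset.mem_sdiff, Finset.mem_inter] at ha hb
        tauto
  case li =>
    intro q hq
    obtain ⟨-, h1, h2, h3⟩ := Finset.mem_filter.mp hq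
    obtain ⟨e1, e2, e3⟩ := tri_aux h1 h2 h3
    refine Prod.ext (Subtype.ext ?_) (Prod.ext (Subtype.ext ?_) (Subtype.ext ?_)) <;>
      simpa using (by first | exact e1 | exact e2 | exact e3)
  case ri =>
    intro p hp
    refine Prod.ext (Subtype.ext ?_) (Subtype.ext ?_) <;> simp only
    · exact Finset.sdiff_union_inter p.1.val p.2.val
    · rw [Finset.inter_comm]
      exact Finset.sdiff_union_inter p.2.val p.1.val
  case h =>
    intro q hq
    obtain ⟨-, h1, h2, h3⟩ := Finset.mem_filter.mp hq
    obtain ⟨e1, e2, e3⟩ := tri_aux h1 h2 h3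
    have hcond : (((q.2.1.val ∪ q.1.val)) ∩ ((q.2.2.val ∪ q.1.val))).card = i := by
      rw [e1, q.1.2]
    simp only [liftMatrix, resVec, dif_pos h1, dif_pos h2, dif_pos hcond]
    congr 1 <;> congr 1 <;> congr 1 <;>
      first
        | rfl
        | exact Subtype.ext e2.symm
        | exact Subtype.ext e3.symm
        | exact e2.symm
        | exact e3.symm

/-- Counting: the `ℓ²`-mass of the restrictions. -/
private lemma card_sub_filter {n d i : ℕ} (hi : i ≤ d) (I : SS n d) :
    (Finset.univ.filter (fun S : SS n i => S.val ⊆ I.val)).card = d.choose i := by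
  classical
  rw [show d.choose i = (Finset.powersetCard i I.val).card by
    rw [Finset.card_powersetCard, I.2]]
  apply Finset.card_bij (fun S _ => S.val)
  · intro S hS
    rw [Finset.mem_powersetCard]
    exact ⟨(Finset.mem_filter.mp hS).2, S.2⟩
  · intro S _ S' _ h; exact Subtype.ext h
  · intro s hs
    rw [Finset.mem_powersetCard] at hs
    exact ⟨⟨s, hs.2⟩, Finset.mem_filter.mpr ⟨Finset.mem_univ _, hs.1⟩, rfl⟩

lemma sum_res_sq {n d i : ℕ} (hi : i ≤ d) (x : SS n d → ℝ) :
    ∑ S : SS n i, ∑ A : SS n (d - i), (resVec hi S x A) ^ 2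
      = (d.choose i : ℝ) * ∑ I : SS n d, (x I) ^ 2 := by
  classical
  have lhs_eq : ∑ S : SS n i, ∑ A : SS n (d - i), (resVec hi S x A) ^ 2
      = ∑ p ∈ Finset.univ.filter
          (fun p : SS n i × SS n (d - i) => Disjoint p.2.val p.1.val),
          (resVec hi p.1 x p.2) ^ 2 := by
    have e1 : ∑ p : SS n i × SS n (d - i), (resVec hi p.1 x p.2) ^ 2
        = ∑ S : SS n i, ∑ A : SS n (d - i), (resVec hi S x A) ^ 2 :=
      Fintype.sum_prod_type _
    rw [← e1, Finset.sum_filter_of_ne]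
    intro p _ hp
    by_contra hd
    exact hp (by simp [resVec, dif_neg hd])
  have rhs_eq : ∑ q ∈ Finset.univ.filter
          (fun q : SS n d × SS n i => q.2.val ⊆ q.1.val), (x q.1) ^ 2
      = (d.choose i : ℝ) * ∑ I : SS n d, (x I) ^ 2 := by
    have e2 : ∑ q : SS n d × SS n i,
          (if q.2.val ⊆ q.1.val then (x q.1) ^ 2 else 0)
        = ∑ I : SS n d, ∑ S : SS n i, (if S.val ⊆ I.val then (x I) ^ 2 else 0) :=
      Fintype.sum_prod_type _
    rw [Finset.sum_filter, e2, Finset.mul_sum]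
    apply Finset.sum_congr rfl
    intro I _
    rw [← Finset.sum_filter, Finset.sum_const, card_sub_filter hi I, nsmul_eq_mul]
  rw [lhs_eq, ← rhs_eq]
  refine Finset.sum_bij'
    (fun p hp => ((⟨p.2.val ∪ p.1.val,
      card_union_aux hi p.2.2 p.1.2 (Finset.mem_filter.mp hp).2⟩ : SS n d), p.1))
    (fun q hq => (q.2, (⟨q.1.val \ q.2.val, by
      rw [Finset.card_sdiff_of_subset (Finset.mem_filter.mp hq).2, q.1.2, q.2.2]⟩ : SS n (d - i))))
    ?hi ?hj ?li ?ri ?h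
  case hi =>
    intro p hp
    exact Finset.mem_filter.mpr ⟨Finset.mem_univ _, Finset.subset_union_right⟩
  case hj =>
    intro q hq
    exact Finset.mem_filter.mpr ⟨Finset.mem_univ _, Finset.sdiff_disjoint⟩
  case li =>
    intro p hp
    have hd := (Finset.mem_filter.mp hp).2
    refine Prod.ext ?_ ?_
    · rfl
    · exact Subtype.ext (Finset.union_sdiff_cancel_right hd)
  case ri =>
    intro q hq
    have hs := (Finset.mem_filter.mp hq).2
    refine Prod.ext ?_ ?_
    · exact Subtype.ext (Finset.sdiff_union_of_subset hs)
    · rfl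
  case h =>
    intro p hp
    have hd := (Finset.mem_filter.mp hp).2
    simp only [resVec, dif_pos hd]

/-- Per-block bound via the operator norm. -/
lemma bilinear_le {m : Type*} [Fintype m] [DecidableEq m]
    (X : Matrix m m ℝ) (u v : m → ℝ) :
    ∑ A, ∑ B, u A * X A B * v B ≤
      opNorm X * Real.sqrt (∑ A, u A ^ 2) * Real.sqrt (∑ B, v B ^ 2) := by
  set T := Matrix.toEuclideanCLM (𝕜 := ℝ) X
  set u' : EuclideanSpace ℝ m := (WithLp.equiv 2 (m → ℝ)).symm u
  set v' : EuclideanSpace ℝ m := (WithLp.equiv 2 (m → ℝ)).symm v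
  have h1 : ∑ A, ∑ B, u A * X A B * v B = inner ℝ u' (T v') := by
    rw [PiLp.inner_apply]
    apply Finset.sum_congr rfl; intro A _
    have : T v' A = ∑ B, X A B * v B := rfl
    simp only [RCLike.inner_apply, conj_trivial, this]
    rw [Finset.sum_mul]
    · apply Finset.sum_congr rfl; intro B _
      rw [show u' A = u A from rfl]; ring
  have h2 : (inner ℝ u' (T v') : ℝ) ≤ ‖u'‖ * ‖T v'‖ := real_inner_le_norm _ _
  have h3 : ‖T v'‖ ≤ opNorm X * ‖v'‖ := T.le_opNorm v'
  have hu : ‖u'‖ = Real.sqrt (∑ A, u A ^ 2) := by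
    rw [EuclideanSpace.norm_eq]
    congr 1; apply Finset.sum_congr rfl; intro A _
    rw [Real.norm_eq_abs, sq_abs]; rfl
  have hv : ‖v'‖ = Real.sqrt (∑ B, v B ^ 2) := by
    rw [EuclideanSpace.norm_eq]
    congr 1; apply Finset.sum_congr rfl; intro B _
    rw [Real.norm_eq_abs, sq_abs]; rfl
  calc ∑ A, ∑ B, u A * X A B * v B = inner ℝ u' (T v') := h1
    _ ≤ ‖u'‖ * ‖T v'‖ := h2
    _ ≤ ‖u'‖ * (opNorm X * ‖v'‖) := by
        exact mul_le_mul_of_nonneg_left h3 (norm_nonneg _)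
    _ = opNorm X * Real.sqrt (∑ A, u A ^ 2) * Real.sqrt (∑ B, v B ^ 2) := by
        rw [hu, hv]; ring

/-- The main bilinear bound. -/
lemma main_bilinear {n d i : ℕ} (hi : i ≤ d)
    (X : Matrix (SS n (d - i)) (SS n (d - i)) ℝ)
    (hX : ∀ I' J' : SS n (d - i), I'.val ∩ J'.val ≠ ∅ → X I' J' = 0)
    (x y : SS n d → ℝ) :
    ∑ I : SS n d, ∑ J : SS n d, x I * liftMatrix X I J * y J
      ≤ (d.choose i : ℝ) * opNorm X *
          Real.sqrt (∑ I : SS n d, (x I) ^ 2) * Real.sqrt (∑ J : SS n d, (y J) ^ 2) := by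
  rw [sum_lift_eq hi X hX x y]
  set N := opNorm X with hN
  set C := (d.choose i : ℝ) with hCdef
  set a : SS n i → ℝ := fun S => Real.sqrt (∑ A : SS n (d - i), (resVec hi S x A) ^ 2)
  set b : SS n i → ℝ := fun S => Real.sqrt (∑ B : SS n (d - i), (resVec hi S y B) ^ 2)
  have hstep : ∀ S : SS n i, ∑ A : SS n (d - i), ∑ B : SS n (d - i),
      resVec hi S x A * X A B * resVec hi S y B ≤ N * a S * b S := by
    intro S
    exact bilinear_le X (resVec hi S x) (resVec hi S y)
  have hsum : ∑ S : SS n i, ∑ A : SS n (d - i), ∑ B : SS n (d - i),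
      resVec hi S x A * X A B * resVec hi S y B ≤ ∑ S : SS n i, N * a S * b S :=
    Finset.sum_le_sum fun S _ => hstep S
  refine le_trans hsum ?_
  have hC : (0 : ℝ) ≤ C := by positivity
  have hNn : (0 : ℝ) ≤ N := norm_nonneg _
  have ha : ∀ S, 0 ≤ a S := fun S => Real.sqrt_nonneg _
  have hb : ∀ S, 0 ≤ b S := fun S => Real.sqrt_nonneg _
  have hX2 : ∑ S : SS n i, (a S) ^ 2 = C * ∑ I : SS n d, (x I) ^ 2 := by
    rw [← sum_res_sq hi x]
    apply Finset.sum_congr rfl; intro S _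
    exact Real.sq_sqrt (Finset.sum_nonneg fun _ _ => sq_nonneg _)
  have hY2 : ∑ S : SS n i, (b S) ^ 2 = C * ∑ J : SS n d, (y J) ^ 2 := by
    rw [← sum_res_sq hi y]
    apply Finset.sum_congr rfl; intro S _
    exact Real.sq_sqrt (Finset.sum_nonneg fun _ _ => sq_nonneg _)
  have hx2 : (0 : ℝ) ≤ ∑ I : SS n d, (x I) ^ 2 :=
    Finset.sum_nonneg fun _ _ => sq_nonneg _
  have h1 : ∑ S : SS n i, N * a S * b S = N * ∑ S : SS n i, a S * b S := by
    rw [Finset.mul_sum]; apply Finset.sum_congr rfl; intro s _; ring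
  have h2 : ∑ S : SS n i, a S * b S ≤
      Real.sqrt ((∑ S : SS n i, (a S) ^ 2) * (∑ S : SS n i, (b S) ^ 2)) := by
    have hcs := Finset.sum_mul_sq_le_sq_mul_sq Finset.univ a b
    have hnn : 0 ≤ ∑ S : SS n i, a S * b S :=
      Finset.sum_nonneg fun s _ => mul_nonneg (ha s) (hb s)
    calc ∑ S : SS n i, a S * b S
        = Real.sqrt ((∑ S : SS n i, a S * b S) ^ 2) := (Real.sqrt_sq hnn).symm
      _ ≤ _ := Real.sqrt_le_sqrt hcs
  have h3 : Real.sqrt ((∑ S : SS n i, (a S) ^ 2) * (∑ S : SS n i, (b S) ^ 2))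
      = C * Real.sqrt (∑ I : SS n d, (x I) ^ 2) * Real.sqrt (∑ J : SS n d, (y J) ^ 2) := by
    rw [hX2, hY2, show C * (∑ I : SS n d, (x I) ^ 2) * (C * ∑ J : SS n d, (y J) ^ 2)
        = (C * C) * ((∑ I : SS n d, (x I) ^ 2) * ∑ J : SS n d, (y J) ^ 2) by ring,
      Real.sqrt_mul (mul_nonneg hC hC), Real.sqrt_mul_self hC,
      Real.sqrt_mul hx2]
    ring
  calc ∑ S : SS n i, N * a S * b S = N * ∑ S : SS n i, a S * b S := h1
    _ ≤ N * (C * Real.sqrt (∑ I : SS n d, (x I) ^ 2) *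
          Real.sqrt (∑ J : SS n d, (y J) ^ 2)) := by
        rw [← h3]; exact mul_le_mul_of_nonneg_left h2 hNn
    _ = C * N * Real.sqrt (∑ I : SS n d, (x I) ^ 2) *
          Real.sqrt (∑ J : SS n d, (y J) ^ 2) := by ring

/-- Lemma (norms of lifts): if `X` is supported on disjoint pairs, then
`‖X^{(i)}‖ ≤ C(d,i)²·‖X‖`. -/
theorem opNorm_lift_le {n d i : ℕ} (hi : i ≤ d)
    (X : Matrix (SS n (d - i)) (SS n (d - i)) ℝ)
    (hX : ∀ I' J' : SS n (d - i), I'.val ∩ J'.val ≠ ∅ → X I' J' = 0) :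
    opNorm (liftMatrix (n := n) (d := d) (i := i) X) ≤
      ((d.choose i : ℝ)) ^ 2 * opNorm X := by
  have hC1 : (1 : ℝ) ≤ (d.choose i : ℝ) := by
    exact_mod_cast Nat.succ_le_of_lt (Nat.choose_pos hi)
  have hC0 : (0 : ℝ) ≤ (d.choose i : ℝ) := le_trans zero_le_one hC1
  have hX0 : (0 : ℝ) ≤ opNorm X := norm_nonneg _
  have key : opNorm (liftMatrix (n := n) (d := d) (i := i) X) ≤
      (d.choose i : ℝ) * opNorm X := by
    apply ContinuousLinearMap.opNorm_le_bound _ (by positivity)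
    intro v
    set T := Matrix.toEuclideanCLM (𝕜 := ℝ) (liftMatrix (n := n) (d := d) (i := i) X)
    have hTv : ∀ I : SS n d, T v I = ∑ J : SS n d, liftMatrix X I J * v J := by
      intro I; rfl
    have hnormTv : ‖T v‖ = Real.sqrt (∑ I : SS n d, (T v I) ^ 2) := by
      rw [EuclideanSpace.norm_eq]
      congr 1; apply Finset.sum_congr rfl; intro I _
      rw [Real.norm_eq_abs, sq_abs]
    have hnormv : ‖v‖ = Real.sqrt (∑ J : SS n d, (v J) ^ 2) := by
      rw [EuclideanSpace.norm_eq]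
      congr 1; apply Finset.sum_congr rfl; intro J _
      rw [Real.norm_eq_abs, sq_abs]
    have hsq : ‖T v‖ ^ 2 ≤ (d.choose i : ℝ) * opNorm X * ‖T v‖ * ‖v‖ := by
      have h1 : ‖T v‖ ^ 2 = ∑ I : SS n d, ∑ J : SS n d,
          (T v I) * liftMatrix X I J * v J := by
        rw [hnormTv, Real.sq_sqrt (Finset.sum_nonneg fun _ _ => sq_nonneg _)]
        apply Finset.sum_congr rfl; intro I _
        rw [hTv I, sq, Finset.mul_sum]
        apply Finset.sum_congr rfl; intro J _; ring
      rw [h1, hnormTv, hnormv]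
      exact main_bilinear hi X hX _ _
    rcases eq_or_lt_of_le (norm_nonneg (T v)) with h0 | h0
    · rw [← h0]; positivity
    · nlinarith [norm_nonneg v, sq_nonneg (‖T v‖ - ‖v‖)]
  calc opNorm (liftMatrix (n := n) (d := d) (i := i) X)
      ≤ (d.choose i : ℝ) * opNorm X := key
    _ ≤ ((d.choose i : ℝ)) ^ 2 * opNorm X := by
        have h2 : (d.choose i : ℝ) ≤ ((d.choose i : ℝ)) ^ 2 := by nlinarith
        exact mul_le_mul_of_nonneg_right h2 hX0
end
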